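/- arXiv:1703.01143 — 13 statements merged into one kernel-verified Lean document; each statement's English description precedes it below -/
import Mathlib

section
/- For two sequences A and B over a linearly ordered alphabet, if C is a common weakly increasing subsequence of A and B, then the sequence Ĉ obtained by replacing each symbol a of C with w(a) consecutive copies of a (for a positive weight function w) is a common weakly increasing subsequence of Â and B̂, where Â and B̂ are obtained from A and B by the same replacement. Consequently WLCWIS(A,B) ≤ LCWIS(Â,B̂). -/
open List

/-- `C` is a common weakly increasing subsequence of `A` and `B`. -/
def CWIS {σ : Type*} [LinearOrder σ] (A B C : List σ) : Prop :=
  C.Chain' (· ≤ ·) ∧ C.Sublist A ∧ C.Sublist B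

/-- Length of a longest common weakly increasing subsequence. -/
noncomputable def LCWIS {σ : Type*} [LinearOrder σ] (A B : List σ) : ℕ :=
  sSup {n | ∃ C : List σ, CWIS A B C ∧ C.length = n}

/-- Maximum total weight of a common weakly increasing subsequence. -/
noncomputable def WLCWIS {σ : Type*} [LinearOrder σ] (w : σ → ℕ) (A B : List σ) : ℕ :=
  sSup {n | ∃ C : List σ, CWIS A B C ∧ (C.map w).sum = n}

/-- Blow-up: replace each symbol `a` by `w a` consecutive copies of `a`. -/
def blow {σ : Type*} (w : σ → ℕ) (X : List σ) : List σ :=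
  X.flatMap fun a => List.replicate (w a) a

/-!
Blowing up is monotone for the sublist order and keeps a weakly increasing list weakly
increasing, since every block of copies sits between the blocks of its neighbours. So the
blow-up of a common weakly increasing subsequence `C` is one of `Â` and `B̂`, of length equal
to the weight of `C`.
-/

section Blow

variable {σ : Type*} (w : σ → ℕ)

theorem List.Sublist.blow {C A : List σ} (h : C <+ A) : blow w C <+ blow w A :=
  h.flatMap _

theorem length_blow (C : List σ) : (blow w C).length = (C.map w).sum := by
  simp [blow, length_flatMap]

theorem List.IsChain.blow [LinearOrder σ] {C : List σ} (h : C.IsChain (· ≤ ·)) :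
    (blow w C).IsChain (· ≤ ·) := by
  rw [isChain_iff_pairwise] at h ⊢
  refine pairwise_flatMap.2 ⟨fun a _ => pairwise_replicate_of_refl, h.imp fun hab x hx y hy => ?_⟩
  rwa [eq_of_mem_replicate hx, eq_of_mem_replicate hy]

theorem CWIS.blow [LinearOrder σ] {A B C : List σ} (h : CWIS A B C) :
    CWIS (blow w A) (blow w B) (blow w C) :=
  ⟨h.1.blow w, h.2.1.blow w, h.2.2.blow w⟩

end Blow

theorem bddAbove_cwis_length {σ : Type*} [LinearOrder σ] (A B : List σ) :
    BddAbove {n | ∃ C : List σ, CWIS A B C ∧ C.length = n} :=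
  ⟨A.length, by rintro n ⟨C, hC, rfl⟩; exact hC.2.1.length_le⟩

theorem wlcwis_le_lcwis_blow_general {σ : Type*} [LinearOrder σ] (w : σ → ℕ)
    (A B : List σ) :
    (∀ C : List σ, CWIS A B C → CWIS (blow w A) (blow w B) (blow w C)) ∧
    WLCWIS w A B ≤ LCWIS (blow w A) (blow w B) := by
  refine ⟨fun C hC => hC.blow w, csSup_le_csSup (bddAbove_cwis_length _ _) ?_ ?_⟩
  · exact ⟨0, [], ⟨isChain_nil, nil_sublist _, nil_sublist _⟩, rfl⟩
  · rintro n ⟨C, hC, rfl⟩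
    exact ⟨blow w C, hC.blow w, length_blow w C⟩

theorem wlcwis_le_lcwis_blow {σ : Type*} [LinearOrder σ] (w : σ → ℕ) (hw : ∀ a, 0 < w a)
    (A B : List σ) :
    (∀ C : List σ, CWIS A B C → CWIS (blow w A) (blow w B) (blow w C)) ∧
    WLCWIS w A B ≤ LCWIS (blow w A) (blow w B) :=
  wlcwis_le_lcwis_blow_general w A B
end

section
/- If C is the longest common weakly increasing subsequence of Â and B̂ (the blown-up versions of A and B), and a is the smallest symbol of the alphabet, then the number of occurrences of a at the beginning of C is a multiple of w(a). -/
open List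

/-!
Write `C = aᵏ D`, where `D` does not start with `a`. In an embedding of `aᵏ D` into a blown-up
word, the first letter of `D` lies after the last block of `a`s that is used, so every used block
can be taken whole: `aᵐ D` still embeds for some multiple `m ≥ k` of `w a`, in both words.
Taking the smaller of the two such `m` gives a common subsequence, weakly increasing because `a`
is the minimum; maximality of `C` forces `m = k`.
-/

section

variable {α : Type*}

namespace List

theorem exists_eq_replicate_takeWhile_length_append [DecidableEq α] (l : List α) (a : α) :
    ∃ D, D.head? ≠ some a ∧ l = replicate (l.takeWhile (· = a)).length a ++ D := by
  refine ⟨l.dropWhile (· = a), fun h => by simpa [h] using head?_dropWhile_not (· = a) l, ?_⟩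
  conv_lhs => rw [← takeWhile_append_dropWhile (p := (· = a)) (l := l)]
  congr 1
  exact eq_replicate_iff.2 ⟨rfl, fun b hb => by simpa using mem_takeWhile_imp hb⟩

theorem cons_sublist_of_cons_sublist_append_of_notMem {a : α} {l l₁ L : List α}
    (ha : a ∉ l₁) (h : a :: l <+ l₁ ++ L) : a :: l <+ L := by
  induction l₁ with
  | nil => exact h
  | cons b l₁ ih =>
    rw [mem_cons, not_or] at ha
    exact ih ha.2 (h.of_cons_of_ne ha.1)

/-- For `k ≤ n` the truncated `k - n` makes the conclusion `D <+ L`. -/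
theorem sublist_of_replicate_append_sublist_replicate_append {a : α} {k n : ℕ} {D L : List α}
    (hD : D.head? ≠ some a) (h : replicate k a ++ D <+ replicate n a ++ L) :
    replicate (k - n) a ++ D <+ L := by
  induction n generalizing k with
  | zero => simpa using h
  | succ n ih =>
    rw [replicate_succ, cons_append] at h
    cases k with
    | zero =>
      rcases sublist_cons_iff.1 h with h | ⟨r, rfl, -⟩
      · simpa using ih (k := 0) h
      · simp at hD
    | succ k =>
      rw [replicate_succ, cons_append, cons_sublist_cons] at h
      simpa using ih h

end List

theorem blow_cons (w : α → ℕ) (x : α) (X : List α) :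
    blow w (x :: X) = replicate (w x) x ++ blow w X :=
  flatMap_cons

theorem exists_dvd_replicate_append_sublist_blow (w : α → ℕ) {a : α} {D : List α}
    (hD : D.head? ≠ some a) (X : List α) {k : ℕ} (h : replicate k a ++ D <+ blow w X) :
    ∃ m, w a ∣ m ∧ k ≤ m ∧ replicate m a ++ D <+ blow w X := by
  induction X generalizing k with
  | nil =>
    obtain ⟨hk, rfl⟩ : replicate k a = [] ∧ D = [] := by simpa [blow] using h
    exact ⟨0, dvd_zero _, by simpa using hk, by simp [blow]⟩
  | cons x X ih =>
    rw [blow_cons] at h ⊢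
    by_cases hxa : x = a
    · subst hxa
      obtain ⟨m, hm, hkm, hsub⟩ := ih (sublist_of_replicate_append_sublist_replicate_append hD h)
      refine ⟨w x + m, dvd_add dvd_rfl hm, by omega, ?_⟩
      rw [replicate_add, append_assoc]
      exact hsub.append_left _
    · cases k with
      | zero => exact ⟨0, dvd_zero _, le_rfl, h⟩
      | succ k =>
        have hX : replicate (k + 1) a ++ D <+ blow w X := by
          rw [replicate_succ, cons_append] at h ⊢
          exact cons_sublist_of_cons_sublist_append_of_notMem
            (fun hmem => hxa (mem_replicate.1 hmem).2.symm) h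
        obtain ⟨m, hm, hkm, hsub⟩ := ih hX
        exact ⟨m, hm, hkm, hsub.trans (sublist_append_right _ _)⟩

end

theorem takeWhile_min_length_dvd_general {σ : Type*} [LinearOrder σ] (w : σ → ℕ)
    (A B C : List σ) (a : σ) (ha : ∀ b : σ, a ≤ b)
    (hC : CWIS (blow w A) (blow w B) C)
    (hmax : ∀ C' : List σ, CWIS (blow w A) (blow w B) C' → C'.length ≤ C.length) :
    w a ∣ (C.takeWhile (fun x => x = a)).length := by
  obtain ⟨D, hD, hsplit⟩ := exists_eq_replicate_takeWhile_length_append C a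
  generalize (C.takeWhile (fun x => x = a)).length = k at hsplit ⊢
  subst hsplit
  obtain ⟨hchain, hA, hB⟩ := hC
  obtain ⟨mA, hdA, hkA, hsubA⟩ := exists_dvd_replicate_append_sublist_blow w hD A hA
  obtain ⟨mB, hdB, hkB, hsubB⟩ := exists_dvd_replicate_append_sublist_blow w hD B hB
  have hmin : CWIS (blow w A) (blow w B) (replicate (min mA mB) a ++ D) :=
    ⟨(isChain_replicate_of_rel _ le_rfl).append hchain.right_of_append fun x hx y _ =>
        eq_of_mem_replicate (mem_of_mem_getLast? hx) ▸ ha y,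
      (((replicate_sublist_replicate a).2 (min_le_left _ _)).append_right D).trans hsubA,
      (((replicate_sublist_replicate a).2 (min_le_right _ _)).append_right D).trans hsubB⟩
  have hk : min mA mB = k := by
    have := hmax _ hmin
    simp only [length_append, length_replicate] at this
    omega
  rcases min_choice mA mB with h | h <;> rw [← hk, h] <;> assumption

theorem takeWhile_min_length_dvd {σ : Type*} [LinearOrder σ] (w : σ → ℕ) (hw : ∀ b, 0 < w b)
    (A B C : List σ) (a : σ) (ha : ∀ b : σ, a ≤ b)
    (hC : CWIS (blow w A) (blow w B) C)
    (hmax : ∀ C' : List σ, CWIS (blow w A) (blow w B) C' → C'.length ≤ C.length) :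
    w a ∣ (C.takeWhile (fun x => x = a)).length :=
  takeWhile_min_length_dvd_general w A B C a ha hC hmax
end

section
/- For the coordinate gadgets CG₁(x,i) and CG₂(y,i), the longest common weakly increasing subsequence has length 0 if x = 1 and y = 1, and length 1 otherwise. That is, LCWIS(CG₁(x,i), CG₂(y,i)) = 1 − x·y for x, y ∈ {0,1}. -/
open List

/-- First coordinate gadget. -/
def CG1 (x i : ℕ) : List ℕ := if x = 1 then [3*i+2] else [3*i, 3*i+1]

/-- Second coordinate gadget. -/
def CG2 (x i : ℕ) : List ℕ := if x = 1 then [3*i+1] else [3*i, 3*i+2]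

/-- First vector gadget: concatenation of coordinate gadgets (coordinate `k` uses index `k+1`). -/
def VG1 {d : ℕ} (u : Fin d → ℕ) : List ℕ :=
  (List.finRange d).flatMap fun k => CG1 (u k) (k.val + 1)

/-- Second vector gadget. -/
def VG2 {d : ℕ} (v : Fin d → ℕ) : List ℕ :=
  (List.finRange d).flatMap fun k => CG2 (v k) (k.val + 1)

/-! A common subsequence of a duplicate-free list uses each symbol common to both lists at most
once, and any single common symbol is itself a (trivially weakly increasing) common subsequence.
So when the two lists share at most one symbol, `LCWIS` is the number of shared symbols.
The gadgets `CG1 x i` and `CG2 y i` share exactly one symbol (`3i`, `3i+1` or `3i+2`) unless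
`x = y = 1`, when `[3i+2]` and `[3i+1]` share none. -/

section

variable {σ : Type*} [LinearOrder σ] {A B C : List σ}

theorem cwis_nil : CWIS A B [] := ⟨List.isChain_nil, List.nil_sublist A, List.nil_sublist B⟩

theorem cwis_singleton {a : σ} (hA : a ∈ A) (hB : a ∈ B) : CWIS A B [a] :=
  ⟨List.isChain_singleton a, List.singleton_sublist.mpr hA, List.singleton_sublist.mpr hB⟩

theorem CWIS.length_le_card_inter (hA : A.Nodup) (h : CWIS A B C) :
    C.length ≤ (A.toFinset ∩ B.toFinset).card := by
  obtain ⟨-, hCA, hCB⟩ := h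
  rw [← List.toFinset_card_of_nodup (hCA.nodup hA)]
  refine Finset.card_le_card fun a ha => ?_
  simp only [List.mem_toFinset, Finset.mem_inter] at ha ⊢
  exact ⟨hCA.subset ha, hCB.subset ha⟩

theorem lcwis_eq_card_inter (hA : A.Nodup) (h : (A.toFinset ∩ B.toFinset).card ≤ 1) :
    LCWIS A B = (A.toFinset ∩ B.toFinset).card := by
  refine IsGreatest.csSup_eq ⟨?_, ?_⟩
  · rcases Nat.le_one_iff_eq_zero_or_eq_one.mp h with h0 | h1
    · exact ⟨[], cwis_nil, h0.symm⟩
    · obtain ⟨a, ha⟩ := Finset.card_eq_one.mp h1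
      have hmem : a ∈ A.toFinset ∩ B.toFinset := ha ▸ Finset.mem_singleton_self a
      simp only [List.mem_toFinset, Finset.mem_inter] at hmem
      exact ⟨[a], cwis_singleton hmem.1 hmem.2, h1.symm⟩
  · rintro _ ⟨C, hC, rfl⟩
    exact hC.length_le_card_inter hA

end

theorem CG1_nodup (x i : ℕ) : (CG1 x i).Nodup := by
  unfold CG1
  split_ifs <;> simp

theorem card_CG1_inter_CG2 (x y i : ℕ) (hx : x = 0 ∨ x = 1) (hy : y = 0 ∨ y = 1) :
    ((CG1 x i).toFinset ∩ (CG2 y i).toFinset).card = 1 - x * y := by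
  rcases hx with rfl | rfl <;> rcases hy with rfl | rfl <;> simp [CG1, CG2]

theorem lcwis_coordinate_gadgets_general (x y i : ℕ) (hx : x = 0 ∨ x = 1) (hy : y = 0 ∨ y = 1) :
    LCWIS (CG1 x i) (CG2 y i) = 1 - x * y := by
  have hcard := card_CG1_inter_CG2 x y i hx hy
  rw [lcwis_eq_card_inter (CG1_nodup x i) (hcard ▸ Nat.sub_le 1 _), hcard]

theorem lcwis_coordinate_gadgets (x y i : ℕ) (hx : x = 0 ∨ x = 1) (hy : y = 0 ∨ y = 1)
    (hi : 1 ≤ i) :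
    LCWIS (CG1 x i) (CG2 y i) = 1 - x * y :=
  lcwis_coordinate_gadgets_general x y i hx hy
end

section
/- For vectors u, v ∈ {0,1}^d, the longest common weakly increasing subsequence of the vector gadgets VG₁(u) and VG₂(v) has length exactly d − (u·v), where u·v = ∑ᵢ uᵢvᵢ. -/
open List

/-! Both vector gadgets are strictly increasing, so a common weakly increasing subsequence
is just a set of common symbols, and the longest one consists of all symbols of `VG1 u` that
occur in `VG2 v`. The blocks of coordinate `k` occupy the disjoint ranges `[3(k+1), 3(k+1)+2]`,
so these common symbols are counted block by block: `CG1 a i` and `CG2 b i` share exactly one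
symbol unless `a = b = 1`. -/

section Sorted

variable {σ : Type*} [LinearOrder σ]

theorem CWIS.sublist_filter_mem {A B C : List σ} (h : CWIS A B C) :
    C.Sublist (A.filter (· ∈ B)) := by
  obtain ⟨-, hCA, hCB⟩ := h
  have hC : C.filter (· ∈ B) = C :=
    filter_eq_self.mpr fun c hc => decide_eq_true (hCB.subset hc)
  exact hC ▸ hCA.filter _

theorem filter_mem_sublist_of_pairwise_lt {A B : List σ} (hA : A.Pairwise (· < ·))
    (hB : B.Pairwise (· < ·)) : (A.filter (· ∈ B)).Sublist B :=
  sublist_of_subperm_of_pairwise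
    ((hA.filter _).nodup.subperm fun _ hx => of_decide_eq_true (mem_filter.mp hx).2)
    ((hA.filter _).imp le_of_lt) (hB.imp le_of_lt)

theorem LCWIS_eq_length_filter_mem {A B : List σ} (hA : A.Pairwise (· < ·))
    (hB : B.Pairwise (· < ·)) : LCWIS A B = (A.filter (· ∈ B)).length := by
  have hmax : IsGreatest {n | ∃ C, CWIS A B C ∧ C.length = n} (A.filter (· ∈ B)).length :=
    ⟨⟨_, ⟨((hA.filter _).imp le_of_lt).isChain, filter_sublist,
        filter_mem_sublist_of_pairwise_lt hA hB⟩, rfl⟩,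
      by rintro _ ⟨C, hC, rfl⟩; exact hC.sublist_filter_mem.length_le⟩
  exact hmax.csSup_eq

end Sorted

theorem bounds_of_mem_CG1 {x a i : ℕ} (h : x ∈ CG1 a i) : 3 * i ≤ x ∧ x ≤ 3 * i + 2 := by
  unfold CG1 at h; split at h <;> simp at h <;> omega

theorem bounds_of_mem_CG2 {x a i : ℕ} (h : x ∈ CG2 a i) : 3 * i ≤ x ∧ x ≤ 3 * i + 2 := by
  unfold CG2 at h; split at h <;> simp at h <;> omega

theorem CG1_pairwise_lt (a i : ℕ) : (CG1 a i).Pairwise (· < ·) := by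
  unfold CG1; split <;> simp

theorem CG2_pairwise_lt (a i : ℕ) : (CG2 a i).Pairwise (· < ·) := by
  unfold CG2; split <;> simp

theorem pairwise_lt_flatMap_finRange {d : ℕ} {g : Fin d → List ℕ}
    (hg : ∀ k, (g k).Pairwise (· < ·))
    (hbounds : ∀ k, ∀ x ∈ g k, 3 * (k.val + 1) ≤ x ∧ x ≤ 3 * (k.val + 1) + 2) :
    ((finRange d).flatMap g).Pairwise (· < ·) := by
  refine pairwise_flatMap.mpr ⟨fun k _ => hg k, (pairwise_lt_finRange d).imp ?_⟩
  intro j k hjk x hx y hy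
  have := hbounds j x hx
  have := hbounds k y hy
  have : j.val < k.val := hjk
  omega

theorem VG1_pairwise_lt {d : ℕ} (u : Fin d → ℕ) : (VG1 u).Pairwise (· < ·) :=
  pairwise_lt_flatMap_finRange (fun _ => CG1_pairwise_lt _ _) fun _ _ => bounds_of_mem_CG1

theorem VG2_pairwise_lt {d : ℕ} (v : Fin d → ℕ) : (VG2 v).Pairwise (· < ·) :=
  pairwise_lt_flatMap_finRange (fun _ => CG2_pairwise_lt _ _) fun _ _ => bounds_of_mem_CG2

theorem mem_VG2_iff_mem_CG2 {d : ℕ} (v : Fin d → ℕ) (k : Fin d) {x : ℕ}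
    (hlo : 3 * (k.val + 1) ≤ x) (hhi : x ≤ 3 * (k.val + 1) + 2) :
    x ∈ VG2 v ↔ x ∈ CG2 (v k) (k.val + 1) := by
  refine ⟨fun hx => ?_, fun hx => mem_flatMap.mpr ⟨k, mem_finRange k, hx⟩⟩
  obtain ⟨j, -, hj⟩ := mem_flatMap.mp hx
  have := bounds_of_mem_CG2 hj
  obtain rfl : j = k := Fin.ext (by omega)
  exact hj

theorem filter_VG1_mem_VG2 {d : ℕ} (u v : Fin d → ℕ) :
    (VG1 u).filter (· ∈ VG2 v) =
      (finRange d).flatMap fun k => (CG1 (u k) (k.val + 1)).filter (· ∈ CG2 (v k) (k.val + 1)) := by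
  rw [VG1, filter_flatMap]
  refine flatMap_congr fun k _ => filter_congr fun x hx => ?_
  have := bounds_of_mem_CG1 hx
  simp only [mem_VG2_iff_mem_CG2 v k this.1 this.2]

theorem length_filter_CG1_mem_CG2 {a b : ℕ} (ha : a = 0 ∨ a = 1) (hb : b = 0 ∨ b = 1)
    (i : ℕ) : ((CG1 a i).filter (· ∈ CG2 b i)).length = 1 - a * b := by
  rcases ha with rfl | rfl <;> rcases hb with rfl | rfl <;> simp [CG1, CG2]

theorem lcwis_vector_gadgets {d : ℕ} (u v : Fin d → ℕ)
    (hu : ∀ k, u k = 0 ∨ u k = 1) (hv : ∀ k, v k = 0 ∨ v k = 1) :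
    LCWIS (VG1 u) (VG2 v) = d - ∑ k : Fin d, u k * v k := by
  rw [LCWIS_eq_length_filter_mem (VG1_pairwise_lt u) (VG2_pairwise_lt v),
    filter_VG1_mem_VG2, length_flatMap, ← Fin.sum_univ_def]
  have hle : ∀ k ∈ Finset.univ, u k * v k ≤ 1 := fun k _ => by
    rcases hu k with h | h <;> rcases hv k with h' | h' <;> simp [h, h']
  simp only [length_filter_CG1_mem_CG2 (hu _) (hv _), Finset.sum_tsub_distrib _ hle,
    Finset.sum_const, Finset.card_univ, Fintype.card_fin, smul_eq_mul, mul_one]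
end

section
/- LCWIS(VG₁(u), VG₂(v)) ≥ d − u·v for all u, v ∈ {0,1}^d: there exists a weakly increasing common subsequence of the two vector gadgets of length d − u·v. -/
open List

/-!
Unless `x = y = 1`, the coordinate gadgets `CG1 x i` and `CG2 y i` share the symbol
`3i + 2x + y`. All symbols of the `i`-th gadgets lie in `[3i, 3i+2]`, so choosing this shared
symbol in every coordinate with `u k * v k = 0` yields a weakly increasing common subsequence of
the vector gadgets with one symbol per such coordinate.
-/

lemma le_LCWIS_of_CWIS {σ : Type*} [LinearOrder σ] {A B C : List σ} (h : CWIS A B C) :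
    C.length ≤ LCWIS A B :=
  le_csSup ⟨A.length, by rintro n ⟨D, hD, rfl⟩; exact hD.2.1.length_le⟩ ⟨C, h, rfl⟩

def coordCommon (x y i : ℕ) : List ℕ := if x * y = 1 then [] else [3*i + 2*x + y]

section coordCommon

variable {x y : ℕ} (hx : x = 0 ∨ x = 1) (hy : y = 0 ∨ y = 1) (i : ℕ)
include hx hy

lemma coordCommon_sublist_CG1 : (coordCommon x y i).Sublist (CG1 x i) := by
  rcases hx with rfl | rfl <;> rcases hy with rfl | rfl <;> simp [coordCommon, CG1]

lemma coordCommon_sublist_CG2 : (coordCommon x y i).Sublist (CG2 y i) := by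
  rcases hx with rfl | rfl <;> rcases hy with rfl | rfl <;> simp [coordCommon, CG2]

lemma length_coordCommon : (coordCommon x y i).length = 1 - x * y := by
  rcases hx with rfl | rfl <;> rcases hy with rfl | rfl <;> simp [coordCommon]

lemma mem_Icc_of_mem_coordCommon {a : ℕ} (ha : a ∈ coordCommon x y i) :
    a ∈ Finset.Icc (3*i) (3*i + 2) := by
  rcases hx with rfl | rfl <;> rcases hy with rfl | rfl <;>
    simp_all [coordCommon]

end coordCommon

def vectorCommon {d : ℕ} (u v : Fin d → ℕ) : List ℕ :=
  (List.finRange d).flatMap fun k => coordCommon (u k) (v k) (k.val + 1)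

section vectorCommon

variable {d : ℕ} {u v : Fin d → ℕ} (hu : ∀ k, u k = 0 ∨ u k = 1) (hv : ∀ k, v k = 0 ∨ v k = 1)
include hu hv

lemma isChain_vectorCommon : (vectorCommon u v).IsChain (· ≤ ·) := by
  refine List.Pairwise.isChain (List.pairwise_flatMap.2 ⟨fun k _ => ?_, ?_⟩)
  · unfold coordCommon; split <;> simp
  · refine (List.pairwise_lt_finRange d).imp fun {k l} hkl a ha b hb => ?_
    have hak := Finset.mem_Icc.1 (mem_Icc_of_mem_coordCommon (hu k) (hv k) _ ha)
    have hbl := Finset.mem_Icc.1 (mem_Icc_of_mem_coordCommon (hu l) (hv l) _ hb)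
    have : k.val < l.val := hkl
    omega

lemma CWIS_vectorCommon : CWIS (VG1 u) (VG2 v) (vectorCommon u v) :=
  ⟨isChain_vectorCommon hu hv,
    Sublist.flatMap_right _ fun k _ => coordCommon_sublist_CG1 (hu k) (hv k) _,
    Sublist.flatMap_right _ fun k _ => coordCommon_sublist_CG2 (hu k) (hv k) _⟩

lemma length_vectorCommon : (vectorCommon u v).length = d - ∑ k : Fin d, u k * v k := by
  have hle : ∀ k ∈ Finset.univ, u k * v k ≤ 1 := fun k _ => by
    rcases hu k with h | h <;> rcases hv k with h' | h' <;> simp [h, h']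
  calc (vectorCommon u v).length
      = ∑ k : Fin d, (1 - u k * v k) := by
        simp [vectorCommon, List.length_flatMap, Fin.sum_univ_def,
          length_coordCommon (hu _) (hv _)]
    _ = d - ∑ k : Fin d, u k * v k := by
        simp [Finset.sum_tsub_distrib _ hle]

end vectorCommon

theorem lcwis_vector_gadgets_ge {d : ℕ} (u v : Fin d → ℕ)
    (hu : ∀ k, u k = 0 ∨ u k = 1) (hv : ∀ k, v k = 0 ∨ v k = 1) :
    (∃ C : List ℕ, CWIS (VG1 u) (VG2 v) C ∧ C.length = d - ∑ k : Fin d, u k * v k) ∧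
    d - ∑ k : Fin d, u k * v k ≤ LCWIS (VG1 u) (VG2 v) := by
  have hC := CWIS_vectorCommon hu hv
  have hlen := length_vectorCommon hu hv
  exact ⟨⟨_, hC, hlen⟩, hlen ▸ le_LCWIS_of_CWIS hC⟩
end

section
/- LCWIS(VG₁(u), VG₂(v)) ≤ d − u·v for all u, v ∈ {0,1}^d: any weakly increasing common subsequence of the two vector gadgets has length at most d − u·v. Key facts used: every symbol of the gadgets for coordinate i lies in {3i, 3i+1, 3i+2}, so a weakly increasing common subsequence contributes at most one symbol per coordinate pair (CG₁(uᵢ,i), CG₂(vᵢ,i)), and zero symbols when uᵢ = vᵢ = 1. -/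
open Finset

theorem LCWIS_le_of_forall_length_le {σ : Type*} [LinearOrder σ] {A B : List σ} {m : ℕ}
    (h : ∀ C, CWIS A B C → C.length ≤ m) : LCWIS A B ≤ m :=
  csSup_le ⟨0, [], ⟨List.isChain_nil, List.nil_sublist _, List.nil_sublist _⟩, rfl⟩
    (by rintro n ⟨C, hC, rfl⟩; exact h C hC)

theorem List.length_le_card_inter_of_sublist {α : Type*} [DecidableEq α] {A B C : List α}
    (hA : A.Nodup) (hCA : C.Sublist A) (hCB : C.Sublist B) :
    C.length ≤ (A.toFinset ∩ B.toFinset).card := by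
  rw [← List.toFinset_card_of_nodup (hA.sublist hCA)]
  refine card_le_card fun n hn => ?_
  rw [List.mem_toFinset] at hn
  exact mem_inter.2 ⟨List.mem_toFinset.2 (hCA.subset hn), List.mem_toFinset.2 (hCB.subset hn)⟩

theorem div_three_of_mem_CG1 {x i n : ℕ} (h : n ∈ CG1 x i) : n / 3 = i := by
  unfold CG1 at h; split at h <;> simp at h <;> omega

theorem div_three_of_mem_CG2 {x i n : ℕ} (h : n ∈ CG2 x i) : n / 3 = i := by
  unfold CG2 at h; split at h <;> simp at h <;> omega

theorem eq_of_mem_CG1_of_mem_CG2 {x y i n : ℕ} (hx : x = 0 ∨ x = 1) (hy : y = 0 ∨ y = 1)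
    (h1 : n ∈ CG1 x i) (h2 : n ∈ CG2 y i) : x * y = 0 ∧ n = 3 * i + 2 * x + y := by
  rcases hx with rfl | rfl <;> rcases hy with rfl | rfl <;> simp [CG1, CG2] at h1 h2 <;> omega

theorem VG1_nodup {d : ℕ} (u : Fin d → ℕ) : (VG1 u).Nodup := by
  refine List.nodup_flatMap.2 ⟨fun k _ => ?_, (List.nodup_finRange d).imp fun hkl n hk hl => ?_⟩
  · unfold CG1; split <;> simp
  · have := div_three_of_mem_CG1 hk; have := div_three_of_mem_CG1 hl
    exact hkl (Fin.ext (by omega))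

theorem inter_VG1_VG2_subset {d : ℕ} {u v : Fin d → ℕ} (hu : ∀ k, u k = 0 ∨ u k = 1)
    (hv : ∀ k, v k = 0 ∨ v k = 1) :
    (VG1 u).toFinset ∩ (VG2 v).toFinset ⊆
      ({k | u k * v k = 0} : Finset (Fin d)).image
        fun k => 3 * (k.val + 1) + 2 * u k + v k := by
  intro n hn
  simp only [mem_inter, List.mem_toFinset, VG1, VG2, List.mem_flatMap, List.mem_finRange,
    true_and] at hn
  obtain ⟨⟨k, hk⟩, ⟨l, hl⟩⟩ := hn
  obtain rfl : k = l := Fin.ext (by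
    have := div_three_of_mem_CG1 hk; have := div_three_of_mem_CG2 hl; omega)
  obtain ⟨hkv, rfl⟩ := eq_of_mem_CG1_of_mem_CG2 (hu k) (hv k) hk hl
  exact mem_image.2 ⟨k, mem_filter.2 ⟨mem_univ k, hkv⟩, rfl⟩

theorem card_filter_mul_eq_zero {d : ℕ} {u v : Fin d → ℕ} (hu : ∀ k, u k = 0 ∨ u k = 1)
    (hv : ∀ k, v k = 0 ∨ v k = 1) :
    #({k | u k * v k = 0} : Finset (Fin d)) = d - ∑ k, u k * v k := by
  have hsum : ∑ k, u k * v k + #{k | u k * v k = 0} = d := by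
    rw [card_filter, ← sum_add_distrib]
    calc ∑ k, (u k * v k + if u k * v k = 0 then 1 else 0) = ∑ _k : Fin d, 1 :=
          sum_congr rfl fun k _ => by
            rcases hu k with h | h <;> rcases hv k with h' | h' <;> simp [h, h']
      _ = d := by simp
  omega

theorem lcwis_vector_gadgets_le {d : ℕ} (u v : Fin d → ℕ)
    (hu : ∀ k, u k = 0 ∨ u k = 1) (hv : ∀ k, v k = 0 ∨ v k = 1) :
    (∀ C : List ℕ, CWIS (VG1 u) (VG2 v) C → C.length ≤ d - ∑ k : Fin d, u k * v k) ∧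
    LCWIS (VG1 u) (VG2 v) ≤ d - ∑ k : Fin d, u k * v k := by
  have hlen : ∀ C : List ℕ, CWIS (VG1 u) (VG2 v) C →
      C.length ≤ d - ∑ k : Fin d, u k * v k := by
    rintro C ⟨-, hC1, hC2⟩
    calc C.length ≤ ((VG1 u).toFinset ∩ (VG2 v).toFinset).card :=
          List.length_le_card_inter_of_sublist (VG1_nodup u) hC1 hC2
      _ ≤ #({k | u k * v k = 0} : Finset (Fin d)) :=
          (card_le_card (inter_VG1_VG2_subset hu hv)).trans card_image_le
      _ = d - ∑ k, u k * v k := card_filter_mul_eq_zero hu hv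
  exact ⟨hlen, LCWIS_le_of_forall_length_le hlen⟩
end

section
/- A weakly increasing common subsequence of two sequences of the form X = X' σ₁ X'' and Y = Y' σ₁ Y'' where the middle symbols come from disjoint coordinate blocks: if every symbol of a sequence S lies in the interval [3i, 3i+2] for its coordinate i, and the blocks appear in increasing order of i in both sequences, then any weakly increasing common subsequence decomposes as a concatenation of weakly increasing common subsequences of the corresponding blocks. -/
open List

/-! A sublist of a concatenation of blocks splits into sublists of the blocks, so `C` splits once
along the blocks of `A` and once along those of `B`. Different blocks share no symbol, so filtering
`C` by the symbols of block `i` returns the `i`-th piece of either splitting: the two coincide. -/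

namespace List

variable {ι α : Type*}

theorem exists_eq_flatMap_of_sublist_flatMap {l : List ι} (hl : l.Nodup) {A : ι → List α}
    {C : List α} (h : C <+ l.flatMap A) :
    ∃ Cs : ι → List α, (∀ i ∈ l, Cs i <+ A i) ∧ C = l.flatMap Cs := by
  classical
  induction l generalizing C with
  | nil => exact ⟨fun _ => [], by simp, by simpa using h⟩
  | cons j l ih =>
    obtain ⟨hj, hl⟩ := nodup_cons.mp hl
    obtain ⟨C₁, C₂, rfl, h₁, h₂⟩ := sublist_append_iff.mp (flatMap_cons ▸ h)
    obtain ⟨Cs, hCs, rfl⟩ := ih hl h₂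
    have hupdate : l.flatMap (Function.update Cs j C₁) = l.flatMap Cs :=
      flatMap_congr fun i hi => Function.update_of_ne (ne_of_mem_of_not_mem hi hj) _ _
    refine ⟨Function.update Cs j C₁, ?_, by simp [hupdate]⟩
    rintro i (_ | ⟨_, hi⟩)
    · simpa using h₁
    · simpa [Function.update_of_ne (ne_of_mem_of_not_mem hi hj)] using hCs i hi

variable (p : ι → α → Prop) {l : List ι} {Cs Ds : ι → List α}

theorem filter_flatMap_eq_of_disjoint (hl : l.Nodup) (hp : ∀ i j x, p i x → p j x → i = j)
    (hCs : ∀ i ∈ l, ∀ x ∈ Cs i, p i x) {i : ι} (hi : i ∈ l) [DecidablePred (p i)] :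
    (l.flatMap Cs).filter (p i ·) = Cs i := by
  induction l with
  | nil => simp at hi
  | cons j l ih =>
    obtain ⟨hj, hl⟩ := nodup_cons.mp hl
    rw [flatMap_cons, filter_append]
    rcases eq_or_ne i j with rfl | hij
    · have hrest : (l.flatMap Cs).filter (p i ·) = [] := by
        refine filter_eq_nil_iff.mpr fun x hx hpx => hj ?_
        obtain ⟨k, hk, hxk⟩ := mem_flatMap.mp hx
        exact hp k i x (hCs k (mem_cons_of_mem _ hk) x hxk) (of_decide_eq_true hpx) ▸ hk
      rw [hrest, append_nil, filter_eq_self]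
      exact fun x hx => decide_eq_true (hCs i mem_cons_self x hx)
    · have hfirst : (Cs j).filter (p i ·) = [] :=
        filter_eq_nil_iff.mpr fun x hx hpx =>
          hij (hp i j x (of_decide_eq_true hpx) (hCs j mem_cons_self x hx))
      rw [hfirst, nil_append]
      exact ih hl (fun k hk => hCs k (mem_cons_of_mem _ hk)) ((mem_cons.mp hi).resolve_left hij)

theorem eq_of_flatMap_eq_of_disjoint (hl : l.Nodup) (hp : ∀ i j x, p i x → p j x → i = j)
    (hCs : ∀ i ∈ l, ∀ x ∈ Cs i, p i x) (hDs : ∀ i ∈ l, ∀ x ∈ Ds i, p i x)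
    (h : l.flatMap Cs = l.flatMap Ds) {i : ι} (hi : i ∈ l) : Cs i = Ds i := by
  classical
  rw [← filter_flatMap_eq_of_disjoint p hl hp hCs hi, h,
    filter_flatMap_eq_of_disjoint p hl hp hDs hi]

end List

theorem CWIS.exists_eq_flatMap_of_disjoint {ι α : Type*} [LinearOrder α] (p : ι → α → Prop)
    (hp : ∀ i j x, p i x → p j x → i = j) {l : List ι} (hl : l.Nodup) {A B : ι → List α}
    (hA : ∀ i ∈ l, ∀ x ∈ A i, p i x) (hB : ∀ i ∈ l, ∀ x ∈ B i, p i x) {C : List α}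
    (hC : CWIS (l.flatMap A) (l.flatMap B) C) :
    ∃ Cs : ι → List α, (∀ i ∈ l, CWIS (A i) (B i) (Cs i)) ∧ C = l.flatMap Cs := by
  obtain ⟨hchain, hCA, hCB⟩ := hC
  obtain ⟨Cs, hCsA, rfl⟩ := exists_eq_flatMap_of_sublist_flatMap hl hCA
  obtain ⟨Ds, hDsB, hCD⟩ := exists_eq_flatMap_of_sublist_flatMap hl hCB
  have hCs_eq_Ds : ∀ i ∈ l, Cs i = Ds i :=
    fun i => eq_of_flatMap_eq_of_disjoint p hl hp
      (fun j hj x hx => hA j hj x ((hCsA j hj).mem hx))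
      (fun j hj x hx => hB j hj x ((hDsB j hj).mem hx)) hCD
  refine ⟨Cs, fun i hi => ⟨?_, hCsA i hi, hCs_eq_Ds i hi ▸ hDsB i hi⟩, rfl⟩
  exact hchain.sublist (sublist_flatten_of_mem (mem_map_of_mem hi))

theorem cwis_block_decomposition {d : ℕ} (A B : Fin d → List ℕ)
    (hA : ∀ i : Fin d, ∀ x ∈ A i, 3 * (i.val + 1) ≤ x ∧ x ≤ 3 * (i.val + 1) + 2)
    (hB : ∀ i : Fin d, ∀ x ∈ B i, 3 * (i.val + 1) ≤ x ∧ x ≤ 3 * (i.val + 1) + 2)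
    (C : List ℕ)
    (hC : CWIS ((List.finRange d).flatMap A) ((List.finRange d).flatMap B) C) :
    ∃ Cs : Fin d → List ℕ,
      (∀ i : Fin d, CWIS (A i) (B i) (Cs i)) ∧
      C = (List.finRange d).flatMap Cs := by
  have hdisjoint : ∀ (i j : Fin d) (x : ℕ), 3 * (i.val + 1) ≤ x ∧ x ≤ 3 * (i.val + 1) + 2 →
      3 * (j.val + 1) ≤ x ∧ x ≤ 3 * (j.val + 1) + 2 → i = j :=
    fun i j x hi hj => Fin.ext (by omega)
  obtain ⟨Cs, hCs, rfl⟩ := CWIS.exists_eq_flatMap_of_disjoint _ hdisjoint (nodup_finRange d)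
    (fun i _ => hA i) (fun i _ => hB i) hC
  exact ⟨Cs, fun i => hCs i (mem_finRange i), rfl⟩
end

section
/- Lower bound of the combining lemma: with P₁ = A^{2n} s₁ YB s₂ YB … YB s_n Z^{2n} and P₂ = (ZYBA)^n t₁ ZYBA t₂ ZYBA … ZYBA t_n (ZYBA)^n, we have WLCWIS(P₁,P₂) ≥ max_{1≤i,j≤n} WLCWIS(sᵢ,tⱼ) + (4n−2)·ℓ. In particular, for any 1 ≤ i, j ≤ n and any common weakly increasing subsequence Q of sᵢ and tⱼ, the sequence Q' = A^{n+j−i} B^{i−1} Q Y^{n−i} Z^{n+i−j} is a common weakly increasing subsequence of P₁ and P₂ of total weight w(Q) + (4n−2)·ℓ. -/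
open List

/-- The sequence P₁ = A^{2n} s₁ YB s₂ YB … YB sₙ Z^{2n}. -/
def P1 {Ω : Type*} {n : ℕ} (s : Fin n → List Ω) (a b y z : Ω) : List Ω :=
  List.replicate (2*n) a ++ List.intercalate [y, b] ((List.finRange n).map s) ++
    List.replicate (2*n) z

/-- The sequence P₂ = (ZYBA)ⁿ t₁ ZYBA t₂ … ZYBA tₙ (ZYBA)ⁿ. -/
def P2 {Ω : Type*} {n : ℕ} (t : Fin n → List Ω) (a b y z : Ω) : List Ω :=
  (List.replicate n [z, y, b, a]).flatten ++
    List.intercalate [z, y, b, a] ((List.finRange n).map t) ++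
    (List.replicate n [z, y, b, a]).flatten

/-! The common subsequence `Q'` uses the block `sᵢ` of `P₁` and the block `tⱼ` of `P₂`. In `P₁`
the letters `A`, `Z` come from the outer runs and the `B`s (`Y`s) from the separators before
(after) `sᵢ`; in `P₂` each `ZYBA` block before `tⱼ` supplies one `A` or `B` and each block after it
one `Y` or `Z`, and the exponents of `Q'` are exactly what fits. Since `A < B < Σ < Y < Z`, `Q'` is
weakly increasing, and its extra letters weigh `(4n - 2)ℓ`. Applying this to an optimal `Q` for the
pair `(i, j)` attaining the maximum gives the lower bound. -/
namespace List
variable {α : Type*}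

theorem replicate_sublist_flatten_replicate {c : α} {l : List α} (hc : c ∈ l) (m : ℕ) :
    replicate m c <+ (replicate m l).flatten := by
  induction m with
  | zero => simp
  | succ m ih => simpa [replicate_succ] using (singleton_sublist.2 hc).append ih

theorem replicate_append_replicate_sublist_flatten_replicate {c d : α} {l : List α}
    (hc : c ∈ l) (hd : d ∈ l) {p q m : ℕ} (h : p + q ≤ m) :
    replicate p c ++ replicate q d <+ (replicate m l).flatten := by
  obtain ⟨k, rfl⟩ := Nat.exists_eq_add_of_le h
  rw [replicate_add, replicate_add, flatten_append, flatten_append]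
  exact ((replicate_sublist_flatten_replicate hc p).append
    (replicate_sublist_flatten_replicate hd q)).trans (sublist_append_left _ _)

theorem flatten_replicate_length_sublist_append_intercalate (sep : List α)
    (L : List (List α)) : (replicate L.length sep).flatten <+ sep ++ intercalate sep L := by
  induction L with
  | nil => simp
  | cons l L ih =>
    cases L with
    | nil => simp
    | cons l' L =>
      simpa [replicate_succ] using (ih.trans (sublist_append_right l _)).append_left sep

theorem flatten_replicate_append_getElem_append_sublist_intercalate (sep : List α)
    {L : List (List α)} {i : ℕ} (hi : i < L.length) :
    (replicate i sep).flatten ++ L[i] ++ (replicate (L.length - 1 - i) sep).flatten <+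
      intercalate sep L := by
  induction L generalizing i with
  | nil => simp at hi
  | cons l L ih =>
    cases L with
    | nil =>
      obtain rfl : i = 0 := by simpa using hi
      simp
    | cons l' L =>
      rw [intercalate_cons_cons]
      cases i with
      | zero =>
        simpa using
          (flatten_replicate_length_sublist_append_intercalate sep (l' :: L)).append_left l
      | succ i =>
        have := ((ih (by simpa using hi)).append_left sep).trans (sublist_append_right l _)
        simpa [replicate_succ] using this

theorem pairwise_le_replicate_around [LinearOrder α] {a b y z : α} {Q : List α}
    (hab : a ≤ b) (hby : b ≤ y) (hyz : y ≤ z)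
    (hQ : Q.Pairwise (· ≤ ·)) (hQ_mem : ∀ x ∈ Q, b ≤ x ∧ x ≤ y) (p q r u : ℕ) :
    (replicate p a ++ replicate q b ++ Q ++ replicate r y ++ replicate u z).Pairwise (· ≤ ·) := by
  simp only [pairwise_append, pairwise_replicate, mem_append, mem_replicate]
  grind

end List

section WLCWIS
variable {σ : Type*} [LinearOrder σ] (w : σ → ℕ)

theorem bddAbove_cwis_weights (A B : List σ) :
    BddAbove {m | ∃ C : List σ, CWIS A B C ∧ (C.map w).sum = m} := by
  refine ⟨(A.map w).sum, ?_⟩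
  rintro _ ⟨C, hC, rfl⟩
  exact (hC.2.1.map w).sum_le_sum fun _ _ => Nat.zero_le _

theorem exists_cwis_weight_eq_WLCWIS (A B : List σ) :
    ∃ C, CWIS A B C ∧ (C.map w).sum = WLCWIS w A B := by
  have hne : {m | ∃ C : List σ, CWIS A B C ∧ (C.map w).sum = m}.Nonempty :=
    ⟨0, [], ⟨isChain_nil, nil_sublist _, nil_sublist _⟩, rfl⟩
  exact Nat.sSup_mem hne (bddAbove_cwis_weights w A B)

theorem weight_le_WLCWIS {A B C : List σ} (hC : CWIS A B C) : (C.map w).sum ≤ WLCWIS w A B :=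
  le_csSup (bddAbove_cwis_weights w A B) ⟨C, hC, rfl⟩

theorem WLCWIS_add_le_of_forall_cwis {A B A' B' : List σ} {c : ℕ}
    (h : ∀ C, CWIS A B C → ∃ C', CWIS A' B' C' ∧ (C'.map w).sum = (C.map w).sum + c) :
    WLCWIS w A B + c ≤ WLCWIS w A' B' := by
  obtain ⟨C, hC, hCw⟩ := exists_cwis_weight_eq_WLCWIS w A B
  obtain ⟨C', hC', hC'w⟩ := h C hC
  rw [← hCw, ← hC'w]
  exact weight_le_WLCWIS w hC'

end WLCWIS

section Combining
variable {Ω : Type*} {n : ℕ} {a b y z : Ω}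

theorem sublist_P1 {s : Fin n → List Ω} (i : Fin n) {Q : List Ω} (hQ : Q <+ s i) {p q : ℕ}
    (hp : p ≤ 2 * n) (hq : q ≤ 2 * n) :
    replicate p a ++ replicate i b ++ Q ++ replicate (n - 1 - i) y ++ replicate q z <+
      P1 s a b y z := by
  have hblock := flatten_replicate_append_getElem_append_sublist_intercalate [y, b]
    (L := (finRange n).map s) (i := i) (by simp)
  simp only [length_map, length_finRange, getElem_map, getElem_finRange, Fin.cast_mk,
    Fin.eta] at hblock
  have hmid := ((((replicate_sublist_flatten_replicate (c := b) (by simp) i).append hQ).append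
    (replicate_sublist_flatten_replicate (c := y) (by simp) (n - 1 - i))).trans hblock)
  simpa only [P1, append_assoc] using
    ((replicate_sublist_replicate a).2 hp).append (hmid.append
      ((replicate_sublist_replicate z).2 hq))

theorem sublist_P2 {t : Fin n → List Ω} (j : Fin n) {Q : List Ω} (hQ : Q <+ t j)
    {p q r u : ℕ} (hpq : p + q ≤ n + j) (hru : r + u ≤ n - 1 - j + n) :
    replicate p a ++ replicate q b ++ Q ++ replicate r y ++ replicate u z <+
      P2 t a b y z := by
  have hblock := flatten_replicate_append_getElem_append_sublist_intercalate [z, y, b, a]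
    (L := (finRange n).map t) (i := j) (by simp)
  simp only [length_map, length_finRange, getElem_map, getElem_finRange, Fin.cast_mk,
    Fin.eta] at hblock
  have hleft := replicate_append_replicate_sublist_flatten_replicate
    (c := a) (d := b) (l := [z, y, b, a]) (by simp) (by simp) hpq
  have hright := replicate_append_replicate_sublist_flatten_replicate
    (c := y) (d := z) (l := [z, y, b, a]) (by simp) (by simp) hru
  rw [replicate_add, flatten_append] at hleft hright
  refine Sublist.trans ?_ (((Sublist.refl _).append hblock).append (Sublist.refl _))
  simpa only [append_assoc] using (hleft.append hQ).append hright

theorem sum_map_replicate_append_append_replicate (w : Ω → ℕ) {ℓ : ℕ} (hwa : w a = ℓ)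
    (hwb : w b = 2 * ℓ) (hwy : w y = 2 * ℓ) (hwz : w z = ℓ) {i j : ℕ} (hi : i < n) (hj : j < n)
    (Q : List Ω) :
    ((replicate (n + j - i) a ++ replicate i b ++ Q ++ replicate (n - 1 - i) y ++
      replicate (n + i - j) z).map w).sum = (Q.map w).sum + (4 * n - 2) * ℓ := by
  have hcount : (n + j - i) + 2 * i + 2 * (n - 1 - i) + (n + i - j) = 4 * n - 2 := by omega
  simp only [map_append, sum_append, map_replicate, sum_replicate, smul_eq_mul,
    hwa, hwb, hwy, hwz]
  rw [← hcount]
  ring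

theorem cwis_P1_P2_of_cwis [LinearOrder Ω] {s t : Fin n → List Ω}
    (hab : a ≤ b) (hby : b ≤ y) (hyz : y ≤ z) (i j : Fin n)
    (hs : ∀ x ∈ s i, b ≤ x ∧ x ≤ y) {Q : List Ω} (hQ : CWIS (s i) (t j) Q) :
    CWIS (P1 s a b y z) (P2 t a b y z)
      (replicate (n + j - i) a ++ replicate i b ++ Q ++ replicate (n - 1 - i) y ++
        replicate (n + i - j) z) := by
  obtain ⟨hQsorted, hQs, hQt⟩ := hQ
  exact ⟨isChain_iff_pairwise.2 <| pairwise_le_replicate_around hab hby hyz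
      (isChain_iff_pairwise.1 hQsorted) (fun x hx => hs x (hQs.subset hx)) _ _ _ _,
    sublist_P1 i hQs (by omega) (by omega), sublist_P2 j hQt (by omega) (by omega)⟩

end Combining

theorem combining_lemma_lower_bound_general {Ω : Type*} [LinearOrder Ω] (w : Ω → ℕ) {n : ℕ}
    (hn : 0 < n) (s t : Fin n → List Ω) (a b y z : Ω) (ℓ : ℕ)
    (hab : a < b) (hby : b < y) (hyz : y < z)
    (hs : ∀ i, ∀ x ∈ s i, b < x ∧ x < y)
    (hwa : w a = ℓ) (hwb : w b = 2*ℓ) (hwy : w y = 2*ℓ) (hwz : w z = ℓ) :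
    (∀ (i j : Fin n) (Q : List Ω), CWIS (s i) (t j) Q →
      CWIS (P1 s a b y z) (P2 t a b y z)
        (List.replicate (n + j.val - i.val) a ++ List.replicate i.val b ++ Q ++
          List.replicate (n - 1 - i.val) y ++ List.replicate (n + i.val - j.val) z) ∧
      ((List.replicate (n + j.val - i.val) a ++ List.replicate i.val b ++ Q ++
          List.replicate (n - 1 - i.val) y ++ List.replicate (n + i.val - j.val) z).map w).sum
        = (Q.map w).sum + (4*n - 2) * ℓ) ∧
    Finset.univ.sup (fun ij : Fin n × Fin n => WLCWIS w (s ij.1) (t ij.2)) + (4*n - 2) * ℓ ≤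
      WLCWIS w (P1 s a b y z) (P2 t a b y z) := by
  have embed (i j : Fin n) (Q : List Ω) (hQ : CWIS (s i) (t j) Q) :=
    And.intro (cwis_P1_P2_of_cwis hab.le hby.le hyz.le i j
        (fun x hx => (hs i x hx).imp le_of_lt le_of_lt) hQ)
      (sum_map_replicate_append_append_replicate w hwa hwb hwy hwz i.2 j.2 Q)
  refine ⟨embed, ?_⟩
  have : Nonempty (Fin n) := ⟨⟨0, hn⟩⟩
  obtain ⟨⟨i, j⟩, -, hij⟩ := Finset.exists_mem_eq_sup Finset.univ Finset.univ_nonempty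
    fun ij : Fin n × Fin n => WLCWIS w (s ij.1) (t ij.2)
  rw [hij]
  exact WLCWIS_add_le_of_forall_cwis w fun Q hQ => ⟨_, embed i j Q hQ⟩

theorem combining_lemma_lower_bound {Ω : Type*} [LinearOrder Ω] (w : Ω → ℕ) {n : ℕ}
    (hn : 0 < n) (s t : Fin n → List Ω) (a b y z : Ω) (ℓ : ℕ)
    (hab : a < b) (hby : b < y) (hyz : y < z)
    (hs : ∀ i, ∀ x ∈ s i, b < x ∧ x < y) (ht : ∀ j, ∀ x ∈ t j, b < x ∧ x < y)
    (hwa : w a = ℓ) (hwb : w b = 2*ℓ) (hwy : w y = 2*ℓ) (hwz : w z = ℓ)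
    (hsl : ∀ i, ((s i).map w).sum ≤ ℓ) (htl : ∀ j, ((t j).map w).sum ≤ ℓ) :
    (∀ (i j : Fin n) (Q : List Ω), CWIS (s i) (t j) Q →
      CWIS (P1 s a b y z) (P2 t a b y z)
        (List.replicate (n + j.val - i.val) a ++ List.replicate i.val b ++ Q ++
          List.replicate (n - 1 - i.val) y ++ List.replicate (n + i.val - j.val) z) ∧
      ((List.replicate (n + j.val - i.val) a ++ List.replicate i.val b ++ Q ++
          List.replicate (n - 1 - i.val) y ++ List.replicate (n + i.val - j.val) z).map w).sum
        = (Q.map w).sum + (4*n - 2) * ℓ) ∧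
    Finset.univ.sup (fun ij : Fin n × Fin n => WLCWIS w (s ij.1) (t ij.2)) + (4*n - 2) * ℓ ≤
      WLCWIS w (P1 s a b y z) (P2 t a b y z) :=
  combining_lemma_lower_bound_general w hn s t a b y z ℓ hab hby hyz hs hwa hwb hwy hwz
end

section
/- Upper bound, Case 1 of the combining lemma: consider any common weakly increasing subsequence C of P₁ and P₂ such that at most one sᵢ-fragment of P₁ and at most one tⱼ-fragment of P₂ contribute symbols to C. Then the total weight of C is at most max_{1≤i,j≤n} WLCWIS(sᵢ,tⱼ) + (4n−2)·ℓ. -/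
open List

/-!
Split `C` into its `Σ`-symbols and the rest. The `Σ`-symbols form a common weakly increasing
subsequence of the single pair `sᵢ, tⱼ`, so they weigh at most `WLCWIS(sᵢ, tⱼ)`. The remaining
symbols are `A`, `B`, `Y`, `Z`. In `P₂` these letters form `(ZYBA)^{3n-1}`, and a weakly
increasing subsequence takes at most one symbol from each strictly decreasing block, so there are
at most `3n - 1` of them. Among them, the heavy symbols `B`, `Y` form in `P₁` a weakly increasing
subsequence of `(YB)^{n-1}`, so there are at most `n - 1` of those. Hence the rest weighs at most
`(3n - 1)ℓ + (n - 1)ℓ = (4n - 2)ℓ`.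
-/

namespace List

variable {α : Type*}

theorem filter_intercalate_of_forall_filter_eq_nil (p : α → Bool) (sep : List α)
    {L : List (List α)} (hL : ∀ l ∈ L, l.filter p = []) :
    (sep.intercalate L).filter p = (replicate (L.length - 1) (sep.filter p)).flatten := by
  induction L with
  | nil => simp
  | cons l L ih =>
    cases L with
    | nil => simp [hL l (by simp)]
    | cons l' L =>
      rw [intercalate_cons_cons, filter_append, filter_append, hL l (by simp),
        ih fun m hm => hL m (mem_cons_of_mem l hm)]
      simp [replicate_succ]

theorem sum_map_le_length_add_length_filter_mul {l : List α} (p : α → Prop) [DecidablePred p]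
    {w : α → ℕ} {c : ℕ} (hp : ∀ x ∈ l, p x → w x ≤ 2 * c) (hnp : ∀ x ∈ l, ¬p x → w x ≤ c) :
    (l.map w).sum ≤ (l.length + (l.filter p).length) * c := by
  have hpos := sum_le_card_nsmul ((l.filter p).map w) (2 * c) <| forall_mem_map.2 fun x hx =>
    hp x (mem_of_mem_filter hx) (of_decide_eq_true (mem_filter.1 hx).2)
  have hneg := sum_le_card_nsmul ((l.filter fun x => ¬p x).map w) c <|
    forall_mem_map.2 fun x hx =>
      hnp x (mem_of_mem_filter hx) (of_decide_eq_true (mem_filter.1 hx).2)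
  rw [← sum_map_filter_add_sum_map_filter_not p, length_eq_length_filter_add (p ·)]
  simp only [length_map, smul_eq_mul, decide_not] at hpos hneg ⊢
  linarith

section LinearOrder

variable [LinearOrder α] {l blk : List α}

theorem length_le_one_of_isChain_of_sublist (hl : l.IsChain (· ≤ ·))
    (hblk : blk.Pairwise (· > ·)) (h : l <+ blk) : l.length ≤ 1 :=
  match l, hl, hblk.sublist h with
  | [], _, _ | [_], _, _ => by simp
  | _ :: _ :: _, hl, hpw =>
    absurd (rel_of_isChain_cons_cons hl) (not_le.2 (rel_of_pairwise_cons hpw mem_cons_self))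

theorem length_le_of_isChain_of_sublist_flatten_replicate (hl : l.IsChain (· ≤ ·))
    (hblk : blk.Pairwise (· > ·)) {m : ℕ} (h : l <+ (replicate m blk).flatten) :
    l.length ≤ m := by
  induction m generalizing l with
  | zero => simp_all
  | succ m ih =>
    rw [replicate_succ, flatten_cons, sublist_append_iff] at h
    obtain ⟨l₁, l₂, rfl, h₁, h₂⟩ := h
    have := length_le_one_of_isChain_of_sublist (hl.sublist (sublist_append_left ..)) hblk h₁
    have := ih (hl.sublist (sublist_append_right ..)) h₂
    rw [length_append]
    omega

end LinearOrder

end List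

theorem CWIS.sum_map_le_WLCWIS {σ : Type*} [LinearOrder σ] {A B C : List σ} (h : CWIS A B C)
    (w : σ → ℕ) : (C.map w).sum ≤ WLCWIS w A B := by
  refine le_csSup ⟨(A.map w).sum, ?_⟩ ⟨C, h, rfl⟩
  rintro _ ⟨D, hD, rfl⟩
  exact (hD.2.1.map w).sum_le_sum fun _ _ => Nat.zero_le _

section

variable {Ω : Type*} {n : ℕ} (p : Ω → Bool) (a b y z : Ω)

theorem filter_P1 {s : Fin n → List Ω} (hs : ∀ i, ∀ x ∈ s i, p x = false) (ha : p a = false)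
    (hz : p z = false) :
    (P1 s a b y z).filter p = (replicate (n - 1) ([y, b].filter p)).flatten := by
  rw [P1, filter_append, filter_append, filter_intercalate_of_forall_filter_eq_nil]
  · simp [ha, hz]
  · simpa [filter_eq_nil_iff] using hs

theorem filter_P2 {t : Fin n → List Ω} (ht : ∀ j, ∀ x ∈ t j, p x = false) :
    (P2 t a b y z).filter p =
      (replicate (n + (n - 1) + n) ([z, y, b, a].filter p)).flatten := by
  rw [P2, filter_append, filter_append, filter_intercalate_of_forall_filter_eq_nil]
  · simp only [filter_flatten, map_replicate, length_map, length_finRange, replicate_add,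
      flatten_append, append_assoc]
  · simpa [filter_eq_nil_iff] using ht

end

section

variable {Ω : Type*} [LinearOrder Ω] {n : ℕ} {a b y z : Ω} {D : List Ω}

theorem sublist_flatten_replicate_of_sublist_P1 {s : Fin n → List Ω}
    (hs : ∀ i, ∀ x ∈ s i, b < x ∧ x < y) (hab : a < b) (hby : b < y) (hyz : y < z)
    (hD : D <+ P1 s a b y z) (hDby : ∀ x ∈ D, x = b ∨ x = y) :
    D <+ (replicate (n - 1) [y, b]).flatten := by
  have := hD.filter fun x => x = b ∨ x = y
  rwa [filter_P1 _ _ _ _ _ (fun i x hx => by simp [(hs i x hx).1.ne', (hs i x hx).2.ne])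
    (by simp [hab.ne, (hab.trans hby).ne]) (by simp [(hby.trans hyz).ne', hyz.ne']),
    (filter_eq_self (l := [y, b])).2 (by simp), filter_eq_self.2 (by simpa using hDby)] at this

theorem sublist_flatten_replicate_of_sublist_P2 {t : Fin n → List Ω}
    (ht : ∀ j, ∀ x ∈ t j, b < x ∧ x < y) (hab : a < b) (hyz : y < z)
    (hD : D <+ P2 t a b y z) (hDmid : ∀ x ∈ D, ¬(b < x ∧ x < y)) :
    D <+ (replicate (n + (n - 1) + n) [z, y, b, a]).flatten := by
  have := hD.filter fun x => ¬(b < x ∧ x < y)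
  rwa [filter_P2 _ _ _ _ _ (by simpa using ht),
    (filter_eq_self (l := [z, y, b, a])).2 (by simp [hab.le, hyz.le]),
    filter_eq_self.2 fun x hx => decide_eq_true (hDmid x hx)] at this

theorem sum_map_le_of_isChain_of_sublist_P1_P2 {s t : Fin n → List Ω} {w : Ω → ℕ} {ℓ : ℕ}
    (hab : a < b) (hby : b < y) (hyz : y < z)
    (hs : ∀ i, ∀ x ∈ s i, b < x ∧ x < y) (ht : ∀ j, ∀ x ∈ t j, b < x ∧ x < y)
    (hwa : w a = ℓ) (hwb : w b = 2 * ℓ) (hwy : w y = 2 * ℓ) (hwz : w z = ℓ)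
    (hD : D.IsChain (· ≤ ·)) (hD₁ : D <+ P1 s a b y z) (hD₂ : D <+ P2 t a b y z)
    (hDmid : ∀ x ∈ D, ¬(b < x ∧ x < y)) :
    (D.map w).sum ≤ (4 * n - 2) * ℓ := by
  have hDblk := sublist_flatten_replicate_of_sublist_P2 ht hab hyz hD₂ hDmid
  have hEblk := sublist_flatten_replicate_of_sublist_P1 (D := D.filter fun x => x = b ∨ x = y)
    hs hab hby hyz (filter_sublist.trans hD₁) (by simp)
  have hDlen := length_le_of_isChain_of_sublist_flatten_replicate hD
    (by simp [hab, hby, hyz, hab.trans hby, hby.trans hyz, hab.trans (hby.trans hyz)]) hDblk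
  have hElen := length_le_of_isChain_of_sublist_flatten_replicate (hD.sublist filter_sublist)
    (by simp [hby]) hEblk
  calc (D.map w).sum ≤ (D.length + (D.filter fun x => x = b ∨ x = y).length) * ℓ := by
        refine sum_map_le_length_add_length_filter_mul _ ?_ fun x hx hxby => ?_
        · rintro x - (rfl | rfl) <;> simp [hwb, hwy]
        · obtain ⟨_, hblk, hx⟩ := mem_flatten.1 (hDblk.subset hx)
          obtain ⟨-, rfl⟩ := mem_replicate.1 hblk
          simp only [mem_cons, not_mem_nil, or_false] at hx
          rcases hx with rfl | rfl | rfl | rfl <;> simp [hwa, hwz] at hxby ⊢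
    _ ≤ (4 * n - 2) * ℓ := by gcongr; omega

end

theorem combining_lemma_upper_bound_case1_general {Ω : Type*} [LinearOrder Ω] (w : Ω → ℕ) {n : ℕ}
    (s t : Fin n → List Ω) (a b y z : Ω) (ℓ : ℕ)
    (hab : a < b) (hby : b < y) (hyz : y < z)
    (hs : ∀ i, ∀ x ∈ s i, b < x ∧ x < y) (ht : ∀ j, ∀ x ∈ t j, b < x ∧ x < y)
    (hwa : w a = ℓ) (hwb : w b = 2*ℓ) (hwy : w y = 2*ℓ) (hwz : w z = ℓ)
    (C : List Ω) (hC : CWIS (P1 s a b y z) (P2 t a b y z) C)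
    -- at most one s-fragment contributes: all Σ-symbols of C come from a single s i
    (hcS : ∃ i : Fin n, (C.filter (fun x => decide (b < x ∧ x < y))).Sublist (s i))
    -- at most one t-fragment contributes
    (hcT : ∃ j : Fin n, (C.filter (fun x => decide (b < x ∧ x < y))).Sublist (t j)) :
    (C.map w).sum ≤
      Finset.univ.sup (fun ij : Fin n × Fin n => WLCWIS w (s ij.1) (t ij.2)) +
        (4*n - 2) * ℓ := by
  obtain ⟨hchain, hP1, hP2⟩ := hC
  obtain ⟨i, hi⟩ := hcS
  obtain ⟨j, hj⟩ := hcT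
  rw [← sum_map_filter_add_sum_map_filter_not (fun x => b < x ∧ x < y) w C]
  gcongr
  · calc _ ≤ WLCWIS w (s i) (t j) :=
          CWIS.sum_map_le_WLCWIS ⟨hchain.sublist filter_sublist, hi, hj⟩ w
      _ ≤ _ := Finset.le_sup (f := fun ij : Fin n × Fin n => WLCWIS w (s ij.1) (t ij.2))
          (Finset.mem_univ (i, j))
  · exact sum_map_le_of_isChain_of_sublist_P1_P2 hab hby hyz hs ht hwa hwb hwy hwz
      (hchain.sublist filter_sublist) (filter_sublist.trans hP1) (filter_sublist.trans hP2)
      fun x hx => of_decide_eq_true (mem_filter.1 hx).2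

theorem combining_lemma_upper_bound_case1 {Ω : Type*} [LinearOrder Ω] (w : Ω → ℕ) {n : ℕ}
    (hn : 0 < n) (s t : Fin n → List Ω) (a b y z : Ω) (ℓ : ℕ)
    (hab : a < b) (hby : b < y) (hyz : y < z)
    (hs : ∀ i, ∀ x ∈ s i, b < x ∧ x < y) (ht : ∀ j, ∀ x ∈ t j, b < x ∧ x < y)
    (hwa : w a = ℓ) (hwb : w b = 2*ℓ) (hwy : w y = 2*ℓ) (hwz : w z = ℓ)
    (hsl : ∀ i, ((s i).map w).sum ≤ ℓ) (htl : ∀ j, ((t j).map w).sum ≤ ℓ)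
    (C : List Ω) (hC : CWIS (P1 s a b y z) (P2 t a b y z) C)
    -- at most one s-fragment contributes: all Σ-symbols of C come from a single s i
    (hcS : ∃ i : Fin n, (C.filter (fun x => decide (b < x ∧ x < y))).Sublist (s i))
    -- at most one t-fragment contributes
    (hcT : ∃ j : Fin n, (C.filter (fun x => decide (b < x ∧ x < y))).Sublist (t j)) :
    (C.map w).sum ≤
      Finset.univ.sup (fun ij : Fin n × Fin n => WLCWIS w (s ij.1) (t ij.2)) +
        (4*n - 2) * ℓ :=
  combining_lemma_upper_bound_case1_general w s t a b y z ℓ hab hby hyz hs ht hwa hwb hwy hwz C hC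
    hcS hcT
end

section
/- In a weakly increasing common subsequence of P₁ and P₂, if two distinct sᵢ-fragments of P₁ (with i < i') both contribute at least one symbol, then none of the YB-fragments of P₁ lying between them contributes any symbol. Consequently, if c_S fragments among s₁,…,s_n contribute, then c_B + c_Y ≤ n − 1 − (c_S − 1), where c_B and c_Y count occurrences of B and Y in the subsequence. -/
open List

/-! A weakly increasing subsequence cannot take a letter from a `yb`-fragment lying between two
contributing `sᵢ`-fragments: all letters of the `sᵢ` lie strictly between `b` and `y`, so a `b`
there would follow a larger letter of the earlier fragment, and a `y` would precede a smaller
letter of the later one. Each `yb`-fragment contributes at most one letter (since `b < y`), the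
first one contributes none, and if the contributing `sᵢ` span the indices `m < … < M`, then the
fragments `m+1, …, M` are silent as well; there are at least `c_S - 1` of them. -/

namespace List

variable {α : Type*}

theorem Pairwise.rel_of_mem_flatMap_finRange {R : α → α → Prop} {n : ℕ} {f : Fin n → List α}
    (h : ((finRange n).flatMap f).Pairwise R) {i j : Fin n} (hij : i < j)
    {u v : α} (hu : u ∈ f i) (hv : v ∈ f j) : R u v := by
  have := pairwise_iff_getElem.1 (pairwise_flatMap.1 h).2 i j (by simp) (by simp) hij
  simp only [getElem_finRange, Fin.cast_mk, Fin.eta] at this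
  exact this u hu v hv

theorem count_add_count_le_length [DecidableEq α] {b y : α} (hby : b ≠ y) (l : List α) :
    l.count b + l.count y ≤ l.length := by
  induction l with
  | nil => simp
  | cons x l ih =>
    simp only [count_cons, length_cons]
    split_ifs <;> simp_all <;> omega

theorem length_le_one_of_sublist_pair [Preorder α] {b y : α} (hby : b < y) {l : List α}
    (hl : l <+ [y, b]) (hsorted : l.Pairwise (· ≤ ·)) : l.length ≤ 1 := by
  by_contra! hlen
  have hl_eq : l = [y, b] := hl.eq_of_length (le_antisymm hl.length_le hlen)
  subst hl_eq
  exact hby.not_ge (pairwise_pair.1 hsorted)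

theorem count_append_flatMap_append [DecidableEq α] {n : ℕ} {x : α} {L M : List α}
    {E D : Fin n → List α} (hL : x ∉ L) (hM : x ∉ M) (hD : ∀ i, x ∉ D i) :
    (L ++ (finRange n).flatMap (fun i => E i ++ D i) ++ M).count x = ∑ i, (E i).count x := by
  have hD0 (i : Fin n) : (D i).count x = 0 := count_eq_zero_of_not_mem (hD i)
  simp [count_flatMap, count_eq_zero_of_not_mem hL, count_eq_zero_of_not_mem hM, hD0,
    Fin.sum_univ_def, Function.comp_def]

end List

open Finset

theorem Finset.sum_length_eq_card_filter_ne_nil {ι α : Type*} [Fintype ι] [DecidableEq α]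
    (f : ι → List α) (h : ∀ i, (f i).length ≤ 1) : ∑ i, (f i).length = #{i | f i ≠ []} := by
  rw [card_filter]
  refine sum_congr rfl fun i _ => ?_
  have := h i
  split_ifs with hi
  · have := List.length_pos_iff.2 hi
    omega
  · simp_all

theorem Fin.card_le_sub_of_disjoint_Ioc {n : ℕ} {S T : Finset (Fin n)}
    (hT0 : ∀ k ∈ T, k.val ≠ 0) (hgap : ∀ i ∈ S, ∀ i' ∈ S, Disjoint T (Ioc i i')) :
    #T ≤ n - 1 - (#S - 1) := by
  set P : Finset (Fin n) := {k | k.val ≠ 0}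
  have hT_sub : T ⊆ P := fun k hk => mem_filter.2 ⟨mem_univ k, hT0 k hk⟩
  have hP : #P = n - 1 := by
    rcases n with _ | n
    · simp [P]
    · simp [P, Fin.val_eq_zero_iff, filter_ne']
  rcases S.eq_empty_or_nonempty with rfl | hS
  · simpa [← hP] using card_le_card hT_sub
  set m := S.min' hS
  set M := S.max' hS
  have hIoc_sub : Ioc m M ⊆ P := fun k hk =>
    mem_filter.2 ⟨mem_univ k, by have := (mem_Ioc.1 hk).1; omega⟩
  have hT : #T ≤ n - 1 - (M.val - m.val) := by
    have := card_le_card (subset_sdiff.2 ⟨hT_sub, hgap m (S.min'_mem hS) M (S.max'_mem hS)⟩)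
    rwa [card_sdiff_of_subset hIoc_sub, hP, Fin.card_Ioc] at this
  have hS_card : #S ≤ M.val + 1 - m.val := by
    have := card_le_card (t := Icc m M) fun k hk => mem_Icc.2 ⟨S.min'_le k hk, S.le_max' k hk⟩
    rwa [Fin.card_Icc] at this
  omega

theorem eq_nil_of_between_nonempty {Ω : Type*} [LinearOrder Ω] {n : ℕ} {b y : Ω}
    {D E : Fin n → List Ω} (hF : ((finRange n).flatMap fun i => E i ++ D i).Pairwise (· ≤ ·))
    (hD : ∀ i, ∀ x ∈ D i, b < x ∧ x < y) (hE : ∀ i, (E i).Sublist [y, b])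
    {i i' k : Fin n} (hDi : D i ≠ []) (hDi' : D i' ≠ []) (hik : i < k) (hki' : k ≤ i') :
    E k = [] := by
  refine List.eq_nil_iff_forall_not_mem.2 fun x hx => ?_
  obtain ⟨u, hu⟩ := List.exists_mem_of_ne_nil _ hDi
  obtain ⟨v, hv⟩ := List.exists_mem_of_ne_nil _ hDi'
  have hux : u ≤ x := hF.rel_of_mem_flatMap_finRange hik (mem_append_right _ hu)
    (mem_append_left _ hx)
  have hxv : x ≤ v := by
    rcases hki'.lt_or_eq with hki' | rfl
    · exact hF.rel_of_mem_flatMap_finRange hki' (mem_append_left _ hx) (mem_append_right _ hv)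
    · exact pairwise_append.1 ((pairwise_flatMap.1 hF).1 k (mem_finRange k)) |>.2.2 x hx v hv
  rcases List.mem_pair.1 ((hE k).subset hx) with rfl | rfl
  · exact (hD i' v hv).2.not_ge hxv
  · exact (hD i u hu).1.not_ge hux

theorem yb_fragments_between_contributing_fragments_general {Ω : Type*} [LinearOrder Ω] {n : ℕ}
    (s : Fin n → List Ω) (a b y z : Ω)
    (hab : a < b) (hby : b < y) (hyz : y < z)
    (hs : ∀ i, ∀ x ∈ s i, b < x ∧ x < y)
    (C CA CZ : List Ω) (D E : Fin n → List Ω)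
    (hchain : C.Chain' (· ≤ ·))
    -- a decomposition of C witnessing how it embeds into
    -- P₁ = a^{2n} s₁ yb s₂ yb … yb sₙ z^{2n}; E i is the contribution of the
    -- yb-fragment preceding sᵢ (so E 0 = [], there being n−1 yb-fragments)
    (hdec : C = CA ++ ((List.finRange n).flatMap fun i => E i ++ D i) ++ CZ)
    (hCA : CA.Sublist (List.replicate (2*n) a)) (hCZ : CZ.Sublist (List.replicate (2*n) z))
    (hD : ∀ i, (D i).Sublist (s i)) (hE : ∀ i, (E i).Sublist [y, b])
    (hE0 : ∀ i : Fin n, i.val = 0 → E i = []) :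
    (∀ i i' : Fin n, i < i' → D i ≠ [] → D i' ≠ [] →
      ∀ k : Fin n, i < k → k ≤ i' → E k = []) ∧
    C.count b + C.count y ≤
      n - 1 - ((Finset.univ.filter fun i : Fin n => D i ≠ []).card - 1) := by
  have hpw : (CA ++ _ ++ CZ).Pairwise (· ≤ ·) := hdec ▸ hchain.pairwise
  have hF := (pairwise_append.1 (pairwise_append.1 hpw).1).2.1
  have hDs (i : Fin n) : ∀ x ∈ D i, b < x ∧ x < y := fun x hx => hs i x ((hD i).subset hx)
  have hcount {x : Ω} (hxa : x ≠ a) (hxz : x ≠ z) (hxD : ∀ i, x ∉ D i) :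
      C.count x = ∑ i, (E i).count x :=
    hdec ▸ count_append_flatMap_append (fun h => hxa (eq_of_mem_replicate (hCA.subset h)))
      (fun h => hxz (eq_of_mem_replicate (hCZ.subset h))) hxD
  refine ⟨fun i i' _ hDi hDi' k hik hki' =>
    eq_nil_of_between_nonempty hF hDs hE hDi hDi' hik hki', ?_⟩
  calc C.count b + C.count y
      = ∑ i, ((E i).count b + (E i).count y) := by
        rw [sum_add_distrib, hcount hab.ne' (hby.trans hyz).ne fun i h => (hDs i b h).1.false,
          hcount (hab.trans hby).ne' hyz.ne fun i h => (hDs i y h).2.false]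
    _ ≤ ∑ i, (E i).length := Finset.sum_le_sum fun i _ => count_add_count_le_length hby.ne _
    _ = #{i | E i ≠ []} := sum_length_eq_card_filter_ne_nil E fun i =>
        length_le_one_of_sublist_pair hby (hE i)
          (pairwise_append.1 ((pairwise_flatMap.1 hF).1 i (mem_finRange i))).1
    _ ≤ _ := Fin.card_le_sub_of_disjoint_Ioc
        (fun k hk h0 => (Finset.mem_filter.1 hk).2 (hE0 k h0))
        fun i hi i' hi' => disjoint_left.2 fun k hk hki => (Finset.mem_filter.1 hk).2 <|
          eq_nil_of_between_nonempty hF hDs hE (Finset.mem_filter.1 hi).2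
            (Finset.mem_filter.1 hi').2 (mem_Ioc.1 hki).1 (mem_Ioc.1 hki).2

theorem yb_fragments_between_contributing_fragments {Ω : Type*} [LinearOrder Ω] {n : ℕ}
    (hn : 0 < n) (s : Fin n → List Ω) (a b y z : Ω)
    (hab : a < b) (hby : b < y) (hyz : y < z)
    (hs : ∀ i, ∀ x ∈ s i, b < x ∧ x < y)
    (C CA CZ : List Ω) (D E : Fin n → List Ω)
    (hchain : C.Chain' (· ≤ ·))
    -- a decomposition of C witnessing how it embeds into
    -- P₁ = a^{2n} s₁ yb s₂ yb … yb sₙ z^{2n}; E i is the contribution of the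
    -- yb-fragment preceding sᵢ (so E 0 = [], there being n−1 yb-fragments)
    (hdec : C = CA ++ ((List.finRange n).flatMap fun i => E i ++ D i) ++ CZ)
    (hCA : CA.Sublist (List.replicate (2*n) a)) (hCZ : CZ.Sublist (List.replicate (2*n) z))
    (hD : ∀ i, (D i).Sublist (s i)) (hE : ∀ i, (E i).Sublist [y, b])
    (hE0 : ∀ i : Fin n, i.val = 0 → E i = []) :
    (∀ i i' : Fin n, i < i' → D i ≠ [] → D i' ≠ [] →
      ∀ k : Fin n, i < k → k ≤ i' → E k = []) ∧
    C.count b + C.count y ≤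
      n - 1 - ((Finset.univ.filter fun i : Fin n => D i ≠ []).card - 1) :=
  yb_fragments_between_contributing_fragments_general s a b y z hab hby hyz hs C CA CZ D E hchain
    hdec hCA hCZ hD hE hE0
end

section
/- If C is a weakly increasing common subsequence of P₁ and P₂ in which c_S of the sᵢ-fragments and c_T of the tⱼ-fragments contribute at least one symbol each, then the total weight contributed by symbols of Σ (i.e., symbols from the sᵢ/tⱼ-fragments) is at most min(c_S, c_T)·ℓ. -/
open List

lemma sum_map_flatMap_finRange {α : Type*} {n : ℕ} (w : α → ℕ) (D : Fin n → List α) :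
    (((finRange n).flatMap D).map w).sum = ∑ i, ((D i).map w).sum := by
  rw [Fin.sum_univ_def, map_flatMap, flatMap_def, sum_flatten, map_map]
  rfl

lemma sum_map_flatMap_finRange_le_card_mul {α : Type*} {n ℓ : ℕ} (w : α → ℕ)
    {s D : Fin n → List α} (hDs : ∀ i, (D i).Sublist (s i)) (hsl : ∀ i, ((s i).map w).sum ≤ ℓ) :
    (((finRange n).flatMap D).map w).sum ≤ (Finset.univ.filter fun i => D i ≠ []).card * ℓ := by
  have hnil : ∀ i ∈ Finset.univ, ((D i).map w).sum ≠ 0 → D i ≠ [] := by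
    rintro i - hi hDi
    simp [hDi] at hi
  rw [sum_map_flatMap_finRange, ← Finset.sum_filter_of_ne hnil, ← smul_eq_mul]
  exact Finset.sum_le_card_nsmul _ _ _ fun i _ =>
    ((hDs i).map w).sum_le_sum (fun _ _ => Nat.zero_le _) |>.trans (hsl i)

theorem sigma_contribution_le_min_general {Ω : Type*} [LinearOrder Ω] (w : Ω → ℕ) {n : ℕ}
    (s t : Fin n → List Ω) (b y : Ω) (ℓ : ℕ)
    (hsl : ∀ i, ((s i).map w).sum ≤ ℓ) (htl : ∀ j, ((t j).map w).sum ≤ ℓ)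
    (C : List Ω)
    (D D' : Fin n → List Ω)
    -- the Σ-symbols of C, matched inside the s-fragments in a non-crossing fashion
    (hD : C.filter (fun x => decide (b < x ∧ x < y)) = (List.finRange n).flatMap D)
    (hDs : ∀ i, (D i).Sublist (s i))
    -- and matched inside the t-fragments in a non-crossing fashion
    (hD' : C.filter (fun x => decide (b < x ∧ x < y)) = (List.finRange n).flatMap D')
    (hD't : ∀ j, (D' j).Sublist (t j)) :
    (((C.filter (fun x => decide (b < x ∧ x < y))).map w).sum) ≤
      min ((Finset.univ.filter fun i : Fin n => D i ≠ []).card)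
          ((Finset.univ.filter fun j : Fin n => D' j ≠ []).card) * ℓ := by
  rw [min_mul_of_nonneg _ _ ℓ.zero_le]
  exact le_min (hD ▸ sum_map_flatMap_finRange_le_card_mul w hDs hsl)
    (hD' ▸ sum_map_flatMap_finRange_le_card_mul w hD't htl)

theorem sigma_contribution_le_min {Ω : Type*} [LinearOrder Ω] (w : Ω → ℕ) {n : ℕ}
    (s t : Fin n → List Ω) (a b y z : Ω) (ℓ : ℕ)
    (hab : a < b) (hby : b < y) (hyz : y < z)
    (hs : ∀ i, ∀ x ∈ s i, b < x ∧ x < y) (ht : ∀ j, ∀ x ∈ t j, b < x ∧ x < y)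
    (hsl : ∀ i, ((s i).map w).sum ≤ ℓ) (htl : ∀ j, ((t j).map w).sum ≤ ℓ)
    (C : List Ω) (hC : CWIS (P1 s a b y z) (P2 t a b y z) C)
    (D D' : Fin n → List Ω)
    -- the Σ-symbols of C, matched inside the s-fragments in a non-crossing fashion
    (hD : C.filter (fun x => decide (b < x ∧ x < y)) = (List.finRange n).flatMap D)
    (hDs : ∀ i, (D i).Sublist (s i))
    -- and matched inside the t-fragments in a non-crossing fashion
    (hD' : C.filter (fun x => decide (b < x ∧ x < y)) = (List.finRange n).flatMap D')
    (hD't : ∀ j, (D' j).Sublist (t j)) :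
    (((C.filter (fun x => decide (b < x ∧ x < y))).map w).sum) ≤
      min ((Finset.univ.filter fun i : Fin n => D i ≠ []).card)
          ((Finset.univ.filter fun j : Fin n => D' j ≠ []).card) * ℓ :=
  sigma_contribution_le_min_general w s t b y ℓ hsl htl C D D' hD hDs hD' hD't
end

section
/- AND gadget for LCWIS: let A₁, B₁ be sequences over alphabet Σ₁ and A₂, B₂ over a disjoint alphabet Σ₂, with every symbol of Σ₁ smaller than every symbol of Σ₂ in the combined linear order. Then LCWIS(A₁A₂, B₁B₂) = LCWIS(A₁,B₁) + LCWIS(A₂,B₂), where A₁A₂ denotes concatenation. -/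
open List

/-!
Every symbol of `Σ₁` precedes every symbol of `Σ₂`, so a common weakly increasing subsequence
of the concatenations is a `Σ₁`-part followed by a `Σ₂`-part. Projecting it to either alphabet
(dropping the other symbols) gives common weakly increasing subsequences of `A₁, B₁` and of
`A₂, B₂`, which bounds `LCWIS` from above; concatenating optimal ones for the two halves
attains the bound.
-/

section CWIS

variable {α β : Type*} [LinearOrder α] [LinearOrder β]

lemma bddAbove_cwis_lengths (A B : List α) :
    BddAbove {n | ∃ C : List α, CWIS A B C ∧ C.length = n} :=
  ⟨A.length, fun _ ⟨_, hC, hn⟩ => hn ▸ hC.2.1.length_le⟩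

lemma CWIS.length_le_lcwis {A B C : List α} (h : CWIS A B C) : C.length ≤ LCWIS A B :=
  le_csSup (bddAbove_cwis_lengths A B) ⟨C, h, rfl⟩

lemma exists_cwis_length_eq_lcwis (A B : List α) :
    ∃ C : List α, CWIS A B C ∧ C.length = LCWIS A B :=
  Nat.sSup_mem (s := {n | ∃ C : List α, CWIS A B C ∧ C.length = n})
    ⟨0, [], ⟨isChain_nil, nil_sublist A, nil_sublist B⟩, rfl⟩ (bddAbove_cwis_lengths A B)

lemma lcwis_le_of_forall_cwis {A B : List α} {n : ℕ}
    (h : ∀ C, CWIS A B C → C.length ≤ n) : LCWIS A B ≤ n :=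
  (exists_cwis_length_eq_lcwis A B).elim fun C ⟨hC, hl⟩ => hl ▸ h C hC

lemma CWIS.map {f : α → β} (hf : Monotone f) {A B C : List α} (h : CWIS A B C) :
    CWIS (A.map f) (B.map f) (C.map f) :=
  ⟨isChain_map_of_isChain f (fun _ _ hab => hf hab) h.1, h.2.1.map f, h.2.2.map f⟩

lemma CWIS.filterMap {f : α → Option β}
    (hf : ∀ {x y}, x ≤ y → ∀ {a}, f x = some a → ∀ {b}, f y = some b → a ≤ b)
    {A B C : List α} (h : CWIS A B C) :
    CWIS (A.filterMap f) (B.filterMap f) (C.filterMap f) :=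
  ⟨isChain_iff_pairwise.2 ((isChain_iff_pairwise.1 h.1).filterMap f fun _ _ hxy _ ha _ hb => hf hxy ha hb),
    h.2.1.filterMap f, h.2.2.filterMap f⟩

lemma CWIS.append {A₁ B₁ C₁ A₂ B₂ C₂ : List α} (h₁ : CWIS A₁ B₁ C₁) (h₂ : CWIS A₂ B₂ C₂)
    (h : ∀ x ∈ C₁, ∀ y ∈ C₂, x ≤ y) : CWIS (A₁ ++ A₂) (B₁ ++ B₂) (C₁ ++ C₂) :=
  ⟨isChain_iff_pairwise.2 <| pairwise_append.2
      ⟨isChain_iff_pairwise.1 h₁.1, isChain_iff_pairwise.1 h₂.1, h⟩,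
    h₁.2.1.append h₂.2.1, h₁.2.2.append h₂.2.2⟩

end CWIS

section SumLex

variable {α β : Type*}

lemma length_eq_filterMap_getLeft?_add_getRight? (l : List (α ⊕ₗ β)) :
    l.length = (l.filterMap fun x => (ofLex x).getLeft?).length +
      (l.filterMap fun x => (ofLex x).getRight?).length := by
  induction l with
  | nil => rfl
  | cons x l ih => rcases h : ofLex x with a | b <;> simp [h, ih] <;> omega

lemma filterMap_getLeft?_map_inl_append_map_inr (l₁ : List α) (l₂ : List β) :
    ((l₁.map fun x => (toLex (Sum.inl x) : α ⊕ₗ β)) ++ l₂.map fun x => toLex (Sum.inr x)).filterMap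
      (fun x : α ⊕ₗ β => (ofLex x).getLeft?) = l₁ := by
  simp [Function.comp_def]

lemma filterMap_getRight?_map_inl_append_map_inr (l₁ : List α) (l₂ : List β) :
    ((l₁.map fun x => (toLex (Sum.inl x) : α ⊕ₗ β)) ++ l₂.map fun x => toLex (Sum.inr x)).filterMap
      (fun x : α ⊕ₗ β => (ofLex x).getRight?) = l₂ := by
  simp [Function.comp_def]

variable [LinearOrder α] [LinearOrder β]

lemma Sum.Lex.getLeft?_mono {x y : α ⊕ₗ β} (hxy : x ≤ y) {a : α}
    (ha : (ofLex x).getLeft? = some a) {b : α} (hb : (ofLex y).getLeft? = some b) : a ≤ b := by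
  rw [Sum.getLeft?_eq_some_iff] at ha hb
  rwa [← toLex_ofLex x, ← toLex_ofLex y, ha, hb, Sum.Lex.inl_le_inl_iff] at hxy

lemma Sum.Lex.getRight?_mono {x y : α ⊕ₗ β} (hxy : x ≤ y) {a : β}
    (ha : (ofLex x).getRight? = some a) {b : β} (hb : (ofLex y).getRight? = some b) : a ≤ b := by
  rw [Sum.getRight?_eq_some_iff] at ha hb
  rwa [← toLex_ofLex x, ← toLex_ofLex y, ha, hb, Sum.Lex.inr_le_inr_iff] at hxy

end SumLex

theorem and_gadget_lcwis {σ₁ σ₂ : Type*} [LinearOrder σ₁] [LinearOrder σ₂]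
    (A₁ B₁ : List σ₁) (A₂ B₂ : List σ₂) :
    LCWIS ((A₁.map fun x => (toLex (Sum.inl x) : σ₁ ⊕ₗ σ₂)) ++
             (A₂.map fun x => (toLex (Sum.inr x) : σ₁ ⊕ₗ σ₂)))
          ((B₁.map fun x => (toLex (Sum.inl x) : σ₁ ⊕ₗ σ₂)) ++
             (B₂.map fun x => (toLex (Sum.inr x) : σ₁ ⊕ₗ σ₂))) =
      LCWIS A₁ B₁ + LCWIS A₂ B₂ := by
  apply le_antisymm
  · refine lcwis_le_of_forall_cwis fun C hC => ?_
    have h₁ := (hC.filterMap Sum.Lex.getLeft?_mono).length_le_lcwis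
    have h₂ := (hC.filterMap Sum.Lex.getRight?_mono).length_le_lcwis
    simp only [filterMap_getLeft?_map_inl_append_map_inr,
      filterMap_getRight?_map_inl_append_map_inr] at h₁ h₂
    rw [length_eq_filterMap_getLeft?_add_getRight? C]
    exact add_le_add h₁ h₂
  · obtain ⟨C₁, hC₁, hl₁⟩ := exists_cwis_length_eq_lcwis A₁ B₁
    obtain ⟨C₂, hC₂, hl₂⟩ := exists_cwis_length_eq_lcwis A₂ B₂
    have hC := (hC₁.map Sum.Lex.inl_mono).append (hC₂.map Sum.Lex.inr_mono) (by
      simp only [mem_map]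
      rintro _ ⟨a, -, rfl⟩ _ ⟨b, -, rfl⟩
      exact Sum.Lex.inl_le_inr a b)
    simpa [hl₁, hl₂] using hC.length_le_lcwis
end

section
/- Reduction correctness for Most-Orthogonal Vectors: given sets U = {u¹,…,uⁿ} and V = {v¹,…,vⁿ} of vectors in {0,1}^d, with sᵢ = VG₁(uⁱ) and tⱼ = VG₂(vʲ) (each of length at most 2d, all symbols weight 1) and P₁, P₂ constructed via the combining lemma with ℓ = 2d, it holds that WLCWIS(P₁,P₂) = d − min_{i,j} (uⁱ·vʲ) + (4n−2)·2d. In particular, there exist u ∈ U, v ∈ V with u·v ≤ r if and only if WLCWIS(P₁,P₂) ≥ d − r + (4n−2)·2d. -/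
open List

/-- The weight function of the reduction: A = 1 and Z = 3d+4 get weight ℓ = 2d,
B = 2 and Y = 3d+3 get weight 2ℓ = 4d, and all gadget symbols get weight 1. -/
def redWeight (d : ℕ) : ℕ → ℕ := fun x =>
  if x = 1 then 2*d
  else if x = 2 then 4*d
  else if x = 3*d+3 then 4*d
  else if x = 3*d+4 then 2*d
  else 1

/-!
A weakly increasing common subsequence `C` of `P₁` and `P₂` reads `aᵅ bᵝ G yᵞ zᶻ` with `G` made
of gadget symbols. Both sequences are fragments glued by strictly decreasing separators (`y b` in
`P₁`; `z y b a` in `P₂`, whose padding `(z y b a)ⁿ` separates empty fragments), so every separator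
gives at most one symbol of `C`, and if `G` reaches over `k + 1` fragments it uses up `k`
separators without giving them a symbol. Counting separators gives `β + γ + k₁ ≤ n - 1` and
`α + β + γ + ζ + k₂ ≤ 3n - 1`, so the symbols outside `G` weigh at most `ℓ (4n - 2 - k₁ - k₂)`,
while `G` weighs at most `ℓ (min k₁ k₂ + 1)`. Unless `k₁ = k₂ = 0`, when `G` is a common
subsequence of a single pair of fragments, this is at most `ℓ (4n - 2)`; conversely every such
pair extends to a common subsequence of `P₁` and `P₂` gaining exactly `(4n - 2) ℓ`.

The vector gadgets are strictly increasing, so their common subsequences are sets of common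
symbols, and coordinate `k` contributes one common symbol unless `u k = v k = 1`.
-/

namespace List

variable {α β : Type*}

theorem length_le_one_of_pairwise_of_pairwise_not {R : α → α → Prop} :
    ∀ {l : List α}, l.Pairwise R → l.Pairwise (fun a b => ¬R a b) → l.length ≤ 1
  | [], _, _ | [_], _, _ => by simp
  | _ :: _ :: _, h, h' => absurd (rel_of_pairwise_cons h mem_cons_self)
      (rel_of_pairwise_cons h' mem_cons_self)

theorem intercalate_append_cons (sep m : List α) (X Y : List (List α)) :
    intercalate sep (X ++ m :: Y) = X.flatMap (· ++ sep) ++ m ++ Y.flatMap (sep ++ ·) := by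
  induction X with
  | nil =>
    induction Y generalizing m with
    | nil => simp
    | cons m' Y ih => simpa using ih m'
  | cons x X ih => simp [intercalate_cons_of_ne_nil, ih]

theorem mem_intercalate {sep : List α} {l : List (List α)} {x : α}
    (h : x ∈ intercalate sep l) : x ∈ sep ∨ ∃ m ∈ l, x ∈ m := by
  cases l with
  | nil => simp at h
  | cons m Y =>
    rw [← nil_append (m :: Y), intercalate_append_cons] at h
    simp only [flatMap_nil, nil_append, mem_append, mem_flatMap] at h
    aesop

theorem sublist_flatMap_of_forall_mem {f : β → List α} :
    ∀ {U : List α} {l : List β}, (∀ x ∈ U, ∀ m ∈ l, x ∈ f m) → U.length ≤ l.length →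
      U <+ l.flatMap f
  | [], _, _, _ => nil_sublist _
  | _ :: _, [], _, h => by simp at h
  | x :: U, m :: l, hU, h => by
    rw [flatMap_cons, ← singleton_append]
    exact (singleton_sublist.2 (hU x mem_cons_self m mem_cons_self)).append
      (sublist_flatMap_of_forall_mem (fun x' hx' m' hm' => hU x' (mem_cons_of_mem _ hx') m'
        (mem_cons_of_mem _ hm')) (by simpa using h))

end List

section Intercalate

variable {α : Type*} [LinearOrder α] {I : Set α} [DecidablePred (· ∈ I)] {sep : List α}
  {w : α → ℕ} {ℓ : ℕ}

theorem Set.OrdConnected.filter_eq_nil_of_pairwise (hI : I.OrdConnected) {C₁ C₃ : List α}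
    {x c : α} (hC : (C₁ ++ x :: C₃).Pairwise (· ≤ ·)) (hx : x ∉ I) (hc : c ∈ C₁) (hcI : c ∈ I) :
    C₃.filter (· ∈ I) = [] := by
  refine List.filter_eq_nil_iff.2 fun c' hc' hc'I => hx ?_
  have hcx : c ≤ x := (List.pairwise_append.1 hC).2.2 c hc x List.mem_cons_self
  have hxc' : x ≤ c' := List.rel_of_pairwise_cons (List.pairwise_append.1 hC).2.1 hc'
  exact hI.out hcI (by simpa using hc'I) ⟨hcx, hxc'⟩

/-- `k + 1` is the number of blocks that the part of `C` inside `I` may spread over: each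
separator gives at most one element of `C`, and `k` of them give none. -/
theorem exists_span_of_sublist_intercalate (hI : I.OrdConnected)
    (hsep : sep.Pairwise (· > ·)) (hsepI : ∀ x ∈ sep, x ∉ I)
    {l : List (List α)} (hl : l ≠ []) (hin : ∀ m ∈ l, ∀ x ∈ m, x ∈ I)
    (hw : ∀ m ∈ l, (m.map w).sum ≤ ℓ) {C : List α} (hC : C.Pairwise (· ≤ ·))
    (hsub : C <+ intercalate sep l) :
    ∃ k, C.countP (· ∉ I) + k < l.length ∧ ((C.filter (· ∈ I)).map w).sum ≤ (k + 1) * ℓ ∧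
      (k = 0 → ∃ m ∈ l, C.filter (· ∈ I) <+ m) := by
  obtain ⟨m, r, rfl⟩ := List.exists_cons_of_ne_nil hl
  clear hl
  induction r generalizing m C with
  | nil =>
    rw [intercalate_singleton] at hsub
    have hCI : ∀ x ∈ C, x ∈ I := fun x hx => hin m List.mem_cons_self x (hsub.subset hx)
    rw [List.filter_eq_self.2 (by simpa using hCI)]
    refine ⟨0, by simpa [List.countP_eq_zero] using hCI, ?_, fun _ => ⟨m, by simp, hsub⟩⟩
    simpa using ((hsub.map w).sum_le_sum (by simp)).trans (hw m List.mem_cons_self)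
  | cons m' r ih =>
    rw [intercalate_cons_cons, List.append_assoc] at hsub
    obtain ⟨C₁, C', rfl, h₁, h'⟩ := List.sublist_append_iff.1 hsub
    obtain ⟨C₂, C₃, rfl, h₂, h₃⟩ := List.sublist_append_iff.1 h'
    have hC₁I : ∀ x ∈ C₁, x ∈ I := fun x hx => hin m List.mem_cons_self x (h₁.subset hx)
    have hC₁ : C₁.filter (· ∈ I) = C₁ := List.filter_eq_self.2 (by simpa using hC₁I)
    have hC₁' : C₁.countP (· ∉ I) = 0 := List.countP_eq_zero.2 (by simpa using hC₁I)
    have hwC₁ : (C₁.map w).sum ≤ ℓ :=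
      ((h₁.map w).sum_le_sum (by simp)).trans (hw m List.mem_cons_self)
    obtain ⟨k, hk, hwk, hk0⟩ := ih (m := m') (C := C₃)
      (hC.sublist (List.sublist_append_right _ _ |>.trans (List.sublist_append_right _ _)))
      (fun m'' h => hin m'' (List.mem_cons_of_mem _ h))
      (fun m'' h => hw m'' (List.mem_cons_of_mem _ h)) h₃
    have hC₂ : C₂.length ≤ 1 := List.length_le_one_of_pairwise_of_pairwise_not
      (hC.sublist (List.sublist_append_left _ _ |>.trans (List.sublist_append_right _ _)))
      ((hsep.sublist h₂).imp not_le.2)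
    match C₂, hC₂ with
    | [], _ =>
      refine ⟨k + 1, ?_, ?_, by simp⟩
      · simp only [List.nil_append, List.countP_append, hC₁', List.length_cons] at hk ⊢
        omega
      · simp only [List.nil_append, List.filter_append, hC₁, List.map_append, List.sum_append]
        linarith
    | [x], _ =>
      have hx : x ∉ I := hsepI x (h₂.subset List.mem_cons_self)
      by_cases hC₁0 : C₁ = []
      · subst hC₁0
        refine ⟨k, ?_, ?_, fun h0 => ?_⟩
        · simp [hx] at hk ⊢
          omega
        · simpa [hx] using hwk
        · obtain ⟨m'', hm'', h⟩ := hk0 h0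
          exact ⟨m'', List.mem_cons_of_mem _ hm'', by simpa [hx] using h⟩
      · obtain ⟨c, hc⟩ := List.exists_mem_of_ne_nil C₁ hC₁0
        have hC₃ := hI.filter_eq_nil_of_pairwise (C₃ := C₃) hC hx hc (hC₁I c hc)
        refine ⟨0, ?_, ?_, fun _ => ⟨m, List.mem_cons_self, ?_⟩⟩
        · simp only [List.countP_append, hC₁', List.length_cons] at hk ⊢
          simp [hx] at hk ⊢
          omega
        · simpa [List.filter_append, List.filter_cons, hx, hC₁, hC₃] using hwC₁
        · simpa [List.filter_append, List.filter_cons, hx, hC₁, hC₃] using h₁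

end Intercalate

theorem P2_eq_intercalate {σ : Type*} {n : ℕ} {t : Fin n → List σ} {a b y z : σ} (hn : 0 < n) :
    P2 t a b y z =
      intercalate [z, y, b, a] (replicate n [] ++ (finRange n).map t ++ replicate n []) := by
  obtain ⟨t₀, r, hr⟩ := List.exists_cons_of_ne_nil (l := (finRange n).map t) (by simpa using hn.ne')
  rw [P2, hr, List.append_assoc (replicate n []), List.cons_append, intercalate_append_cons,
    ← List.nil_append (t₀ :: r), intercalate_append_cons]
  simp [List.flatMap_replicate]

theorem eq_nil_or_eq_of_mem_P2_blocks {σ : Type*} {n : ℕ} {t : Fin n → List σ} {m : List σ}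
    (hm : m ∈ replicate n [] ++ (finRange n).map t ++ replicate n []) : m = [] ∨ ∃ j, m = t j := by
  simp only [List.mem_append, List.mem_replicate, List.mem_map] at hm
  rcases hm with (⟨-, rfl⟩ | ⟨j, -, rfl⟩) | ⟨-, rfl⟩ <;> simp

section Combining

variable {σ : Type*} [LinearOrder σ] {n : ℕ} {s t : Fin n → List σ} {a b y z : σ}
  {w : σ → ℕ} {ℓ : ℕ}

theorem mem_P1 (hs : ∀ i, ∀ x ∈ s i, x ∈ Set.Ioo b y) {x : σ} (hx : x ∈ P1 s a b y z) :
    x = a ∨ x = b ∨ x = y ∨ x = z ∨ x ∈ Set.Ioo b y := by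
  simp only [P1, List.mem_append, List.mem_replicate] at hx
  rcases hx with (⟨-, rfl⟩ | hx) | ⟨-, rfl⟩
  · exact Or.inl rfl
  · rcases List.mem_intercalate hx with hx | ⟨m, hm, hx⟩
    · simp only [List.mem_cons, List.not_mem_nil, or_false] at hx
      tauto
    · obtain ⟨i, -, rfl⟩ := List.mem_map.1 hm
      exact Or.inr (Or.inr (Or.inr (Or.inr (hs i x hx))))
  · exact Or.inr (Or.inr (Or.inr (Or.inl rfl)))

theorem filter_P1_s17 (hab : a < b) (hby : b < y) (hyz : y < z)
    (hs : ∀ i, ∀ x ∈ s i, x ∈ Set.Ioo b y) :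
    (P1 s a b y z).filter (· ∈ Set.Ioo a z) = intercalate [y, b] ((finRange n).map s) := by
  rw [P1, List.filter_append, List.filter_append, List.filter_replicate_of_neg (by simp),
    List.filter_replicate_of_neg (by simp), List.filter_eq_self.2]
  · simp
  intro x hx
  rcases List.mem_intercalate hx with hx | ⟨m, hm, hx⟩
  · simp only [List.mem_cons, List.not_mem_nil, or_false] at hx
    rcases hx with rfl | rfl <;> simp [Set.mem_Ioo, hab, hyz, hab.trans hby, hby.trans hyz]
  · obtain ⟨i, -, rfl⟩ := List.mem_map.1 hm
    have := hs i x hx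
    simp [Set.mem_Ioo, hab.trans this.1, this.2.trans hyz]

/-- The weight of a symbol is `ℓ` if it lies outside the gadgets, plus `ℓ` more for `b` and `y`. -/
theorem sum_map_weight_eq (hab : a < b) (hby : b < y) (hyz : y < z) (hwa : w a = ℓ)
    (hwb : w b = 2 * ℓ) (hwy : w y = 2 * ℓ) (hwz : w z = ℓ) :
    ∀ {C : List σ}, (∀ x ∈ C, x = a ∨ x = b ∨ x = y ∨ x = z ∨ x ∈ Set.Ioo b y) →
      (C.map w).sum = ℓ * C.countP (· ∉ Set.Ioo b y) +
        ℓ * (C.filter (· ∈ Set.Ioo a z)).countP (· ∉ Set.Ioo b y) +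
        ((C.filter (· ∈ Set.Ioo b y)).map w).sum
  | [], _ => by simp
  | x :: C, hC => by
    have ih := sum_map_weight_eq hab hby hyz hwa hwb hwy hwz
      fun x hx => hC x (List.mem_cons_of_mem _ hx)
    have hJ : Set.Ioo b y ⊆ Set.Ioo a z := Set.Ioo_subset_Ioo hab.le hyz.le
    rcases hC x List.mem_cons_self with h | h | h | h | hx <;> try subst x
    · have h₁ : a ∉ Set.Ioo b y := fun h => lt_asymm h.1 hab
      have h₂ : a ∉ Set.Ioo a z := fun h => lt_irrefl a h.1
      simp [-Set.mem_Ioo, h₁, h₂, ih, hwa]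
      ring
    · have h₁ : b ∉ Set.Ioo b y := fun h => lt_irrefl b h.1
      have h₂ : b ∈ Set.Ioo a z := ⟨hab, hby.trans hyz⟩
      simp [-Set.mem_Ioo, h₁, h₂, ih, hwb]
      ring
    · have h₁ : y ∉ Set.Ioo b y := fun h => lt_irrefl y h.2
      have h₂ : y ∈ Set.Ioo a z := ⟨hab.trans hby, hyz⟩
      simp [-Set.mem_Ioo, h₁, h₂, ih, hwy]
      ring
    · have h₁ : z ∉ Set.Ioo b y := fun h => lt_asymm h.2 hyz
      have h₂ : z ∉ Set.Ioo a z := fun h => lt_irrefl z h.2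
      simp [-Set.mem_Ioo, h₁, h₂, ih, hwz]
      ring
    · simp [-Set.mem_Ioo, hx, hJ hx, ih]
      ring

theorem exists_span_of_sublist_P2 (hn : 0 < n) (hab : a < b) (hby : b < y) (hyz : y < z)
    (ht : ∀ j, ∀ x ∈ t j, x ∈ Set.Ioo b y) (htw : ∀ j, ((t j).map w).sum ≤ ℓ) {C : List σ}
    (hC : C.Pairwise (· ≤ ·)) (hsub : C <+ P2 t a b y z) :
    ∃ k, C.countP (· ∉ Set.Ioo b y) + k < 3 * n ∧
      ((C.filter (· ∈ Set.Ioo b y)).map w).sum ≤ (k + 1) * ℓ ∧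
      (k = 0 → ∃ j, C.filter (· ∈ Set.Ioo b y) <+ t j) := by
  rw [P2_eq_intercalate hn] at hsub
  obtain ⟨k, hk, hw, h₀⟩ := exists_span_of_sublist_intercalate (I := Set.Ioo b y) (w := w) (ℓ := ℓ)
    Set.ordConnected_Ioo
    (by simp [hab, hby, hyz, hab.trans hby, hby.trans hyz, (hab.trans hby).trans hyz])
    (by simp [hab.le, hyz.le]) (by simp [hn.ne'])
    (fun m hm x hx => by
      rcases eq_nil_or_eq_of_mem_P2_blocks hm with rfl | ⟨j, rfl⟩
      exacts [absurd hx List.not_mem_nil, ht j x hx])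
    (fun m hm => by rcases eq_nil_or_eq_of_mem_P2_blocks hm with rfl | ⟨j, rfl⟩ <;> simp [htw])
    hC hsub
  simp only [List.length_append, List.length_replicate, List.length_map,
    List.length_finRange] at hk
  refine ⟨k, by omega, hw, fun hk₀ => ?_⟩
  obtain ⟨m, hm, hm'⟩ := h₀ hk₀
  rcases eq_nil_or_eq_of_mem_P2_blocks hm with rfl | ⟨j, rfl⟩
  · exact ⟨⟨0, hn⟩, List.sublist_nil.1 hm' ▸ List.nil_sublist _⟩
  · exact ⟨j, hm'⟩

theorem exists_span_of_sublist_P1 (hn : 0 < n) (hab : a < b) (hby : b < y) (hyz : y < z)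
    (hs : ∀ i, ∀ x ∈ s i, x ∈ Set.Ioo b y) (hsw : ∀ i, ((s i).map w).sum ≤ ℓ) {C : List σ}
    (hC : C.Pairwise (· ≤ ·)) (hsub : C <+ P1 s a b y z) :
    ∃ k, (C.filter (· ∈ Set.Ioo a z)).countP (· ∉ Set.Ioo b y) + k < n ∧
      ((C.filter (· ∈ Set.Ioo b y)).map w).sum ≤ (k + 1) * ℓ ∧
      (k = 0 → ∃ i, C.filter (· ∈ Set.Ioo b y) <+ s i) := by
  have hsub' := hsub.filter (· ∈ Set.Ioo a z)
  rw [filter_P1_s17 hab hby hyz hs] at hsub'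
  obtain ⟨k, hk, hw, h₀⟩ := exists_span_of_sublist_intercalate (I := Set.Ioo b y) (w := w) (ℓ := ℓ)
    Set.ordConnected_Ioo
    (by simp [hby]) (by simp) (by simp [hn.ne']) (by simpa using hs) (by simp [hsw])
    (hC.filter _) hsub'
  have hJ : Set.Ioo b y ⊆ Set.Ioo a z := Set.Ioo_subset_Ioo hab.le hyz.le
  have hmid : (C.filter (· ∈ Set.Ioo a z)).filter (· ∈ Set.Ioo b y) =
      C.filter (· ∈ Set.Ioo b y) := by
    rw [List.filter_filter]
    refine List.filter_congr fun x _ => ?_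
    by_cases hx : x ∈ Set.Ioo b y
    · simp [hx, hJ hx]
    · simp [hx]
  rw [hmid] at hw h₀
  rw [List.length_map, List.length_finRange] at hk
  refine ⟨k, hk, hw, fun hk₀ => ?_⟩
  obtain ⟨m, hm, hm'⟩ := h₀ hk₀
  obtain ⟨i, -, rfl⟩ := List.mem_map.1 hm
  exact ⟨i, hm'⟩

theorem sum_map_le_of_CWIS_P1_P2 (hn : 0 < n) (hab : a < b) (hby : b < y) (hyz : y < z)
    (hs : ∀ i, ∀ x ∈ s i, x ∈ Set.Ioo b y) (ht : ∀ j, ∀ x ∈ t j, x ∈ Set.Ioo b y)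
    (hsw : ∀ i, ((s i).map w).sum ≤ ℓ) (htw : ∀ j, ((t j).map w).sum ≤ ℓ)
    (hwa : w a = ℓ) (hwb : w b = 2 * ℓ) (hwy : w y = 2 * ℓ) (hwz : w z = ℓ) {M : ℕ}
    (hM : ∀ i j D, CWIS (s i) (t j) D → (D.map w).sum ≤ M) {C : List σ}
    (hC : CWIS (P1 s a b y z) (P2 t a b y z) C) :
    (C.map w).sum ≤ M + (4 * n - 2) * ℓ := by
  obtain ⟨hCs, hC₁, hC₂⟩ := hC
  have hsorted : C.Pairwise (· ≤ ·) := List.isChain_iff_pairwise.1 hCs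
  obtain ⟨k₁, hk₁, hw₁, h₁⟩ := exists_span_of_sublist_P1 hn hab hby hyz hs hsw hsorted hC₁
  obtain ⟨k₂, hk₂, hw₂, h₂⟩ := exists_span_of_sublist_P2 hn hab hby hyz ht htw hsorted hC₂
  rw [sum_map_weight_eq hab hby hyz hwa hwb hwy hwz fun x hx => mem_P1 hs (hC₁.subset hx)]
  set o₁ := (C.filter (· ∈ Set.Ioo a z)).countP (· ∉ Set.Ioo b y)
  set o₂ := C.countP (· ∉ Set.Ioo b y)
  set g := ((C.filter (· ∈ Set.Ioo b y)).map w).sum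
  by_cases hk : k₁ = 0 ∧ k₂ = 0
  · obtain ⟨i, hi⟩ := h₁ hk.1
    obtain ⟨j, hj⟩ := h₂ hk.2
    have hg : g ≤ M := hM i j _ ⟨List.isChain_iff_pairwise.2 (hsorted.filter _), hi, hj⟩
    calc ℓ * o₂ + ℓ * o₁ + g ≤ ℓ * (4 * n - 2) + M := by
          rw [← mul_add]; gcongr; omega
      _ = M + (4 * n - 2) * ℓ := by ring
  · obtain ⟨c, hgc, hc⟩ : ∃ c, g ≤ c * ℓ ∧ o₂ + o₁ + c ≤ 4 * n - 2 := by
      rcases Nat.eq_zero_or_pos k₁ with h | h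
      · exact ⟨k₁ + 1, hw₁, by omega⟩
      · exact ⟨k₂ + 1, hw₂, by omega⟩
    calc ℓ * o₂ + ℓ * o₁ + g ≤ ℓ * (o₂ + o₁ + c) := by nlinarith
      _ ≤ (4 * n - 2) * ℓ := by rw [mul_comm]; gcongr
      _ ≤ M + (4 * n - 2) * ℓ := Nat.le_add_left _ _

theorem pairwise_le_replicate_append (hab : a < b) (hby : b < y) (hyz : y < z) {D : List σ}
    (hD : D.Pairwise (· ≤ ·)) (hDI : ∀ x ∈ D, x ∈ Set.Ioo b y) (α β γ ζ : ℕ) :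
    (replicate α a ++ replicate β b ++ D ++ replicate γ y ++ replicate ζ z).Pairwise (· ≤ ·) := by
  simp only [List.pairwise_append, List.pairwise_replicate, List.mem_append, List.mem_replicate]
  refine ⟨⟨⟨⟨by simp, by simp, ?_⟩, hD, ?_⟩, by simp, ?_⟩, by simp, ?_⟩
  all_goals
    intro x hx x' hx'
    grind [lt_trans, le_of_lt]

theorem exists_CWIS_P1_P2 (hab : a < b) (hby : b < y) (hyz : y < z)
    (hs : ∀ i, ∀ x ∈ s i, x ∈ Set.Ioo b y)
    (hwa : w a = ℓ) (hwb : w b = 2 * ℓ) (hwy : w y = 2 * ℓ) (hwz : w z = ℓ)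
    {i j : Fin n} {D : List σ} (hD : CWIS (s i) (t j) D) :
    ∃ C, CWIS (P1 s a b y z) (P2 t a b y z) C ∧
      (C.map w).sum = (D.map w).sum + (4 * n - 2) * ℓ := by
  obtain ⟨hDs, hDi, hDj⟩ := hD
  obtain ⟨X₁, Y₁, h₁⟩ := List.append_of_mem (List.mem_map_of_mem (f := s) (List.mem_finRange i))
  obtain ⟨X₂, Y₂, h₂⟩ := List.append_of_mem (List.mem_map_of_mem (f := t) (List.mem_finRange j))
  have hl₁ := congrArg List.length h₁
  have hl₂ := congrArg List.length h₂
  simp only [List.length_map, List.length_finRange, List.length_append, List.length_cons] at hl₁ hl₂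
  -- `b`s and `y`s are matched with the separators of `P1` around `s i`, and the `a`s and `z`s
  -- fill the remaining separators of `P2` around `t j`
  refine ⟨replicate (n + X₂.length - X₁.length) a ++ replicate X₁.length b ++ D ++
    replicate Y₁.length y ++ replicate (n + X₁.length - X₂.length) z, ⟨?_, ?_, ?_⟩, ?_⟩
  · exact List.isChain_iff_pairwise.2 (pairwise_le_replicate_append hab hby hyz
      (List.isChain_iff_pairwise.1 hDs) (fun x hx => hs i x (hDi.subset hx)) _ _ _ _)
  · rw [P1, h₁, intercalate_append_cons]
    simp only [List.append_assoc]
    refine ((replicate_sublist_replicate a).2 (by omega)).append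
      ((List.sublist_flatMap_of_forall_mem (by simp) (by simp)).append
      (hDi.append ((List.sublist_flatMap_of_forall_mem (by simp) (by simp)).append
      ((replicate_sublist_replicate z).2 (by omega)))))
  · rw [P2_eq_intercalate i.pos, h₂, show replicate n [] ++ (X₂ ++ t j :: Y₂) ++ replicate n [] =
      (replicate n [] ++ X₂) ++ t j :: (Y₂ ++ replicate n []) by simp, intercalate_append_cons]
    rw [show ∀ A B G Y Z : List σ, A ++ B ++ G ++ Y ++ Z = (A ++ B) ++ G ++ (Y ++ Z) by simp]
    refine ((List.sublist_flatMap_of_forall_mem ?_ (by simp; omega)).append hDj).append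
      (List.sublist_flatMap_of_forall_mem ?_ (by simp; omega)) <;>
    · intro x hx m _
      simp only [List.mem_append, List.mem_replicate] at hx
      rcases hx with ⟨-, rfl⟩ | ⟨-, rfl⟩ <;> simp
  · simp only [List.map_append, List.sum_append, List.map_replicate, List.sum_replicate,
      smul_eq_mul, hwa, hwb, hwy, hwz]
    have hαζ : n + X₂.length - X₁.length + (n + X₁.length - X₂.length) = 2 * n := by omega
    have hβγ : X₁.length + Y₁.length = n - 1 := by omega
    calc _ = (n + X₂.length - X₁.length + (n + X₁.length - X₂.length)) * ℓ +
          2 * (X₁.length + Y₁.length) * ℓ + (D.map w).sum := by ring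
      _ = _ := by rw [hαζ, hβγ, show 4 * n - 2 = 2 * n + 2 * (n - 1) by omega]; ring

theorem WLCWIS_P1_P2 (hab : a < b) (hby : b < y) (hyz : y < z)
    (hs : ∀ i, ∀ x ∈ s i, x ∈ Set.Ioo b y) (ht : ∀ j, ∀ x ∈ t j, x ∈ Set.Ioo b y)
    (hsw : ∀ i, ((s i).map w).sum ≤ ℓ) (htw : ∀ j, ((t j).map w).sum ≤ ℓ)
    (hwa : w a = ℓ) (hwb : w b = 2 * ℓ) (hwy : w y = 2 * ℓ) (hwz : w z = ℓ) {M : ℕ}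
    (hM : IsGreatest {v | ∃ i j D, CWIS (s i) (t j) D ∧ (D.map w).sum = v} M) :
    WLCWIS w (P1 s a b y z) (P2 t a b y z) = M + (4 * n - 2) * ℓ := by
  obtain ⟨⟨i, j, D, hD, rfl⟩, hM⟩ := hM
  refine IsGreatest.csSup_eq ⟨?_, ?_⟩
  · exact exists_CWIS_P1_P2 hab hby hyz hs hwa hwb hwy hwz hD
  · rintro _ ⟨C, hC, rfl⟩
    exact sum_map_le_of_CWIS_P1_P2 i.pos hab hby hyz hs ht hsw htw hwa hwb hwy hwz
      (fun i j D hD => hM ⟨i, j, D, hD, rfl⟩) hC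

end Combining

section Gadgets

theorem mem_CG1 {c i x : ℕ} (h : x ∈ CG1 c i) : 3 * i ≤ x ∧ x ≤ 3 * i + 2 := by
  unfold CG1 at h; split at h <;> simp at h <;> omega

theorem mem_CG2 {c i x : ℕ} (h : x ∈ CG2 c i) : 3 * i ≤ x ∧ x ≤ 3 * i + 2 := by
  unfold CG2 at h; split at h <;> simp at h <;> omega

theorem pairwise_CG1 (c i : ℕ) : (CG1 c i).Pairwise (· < ·) := by
  unfold CG1; split <;> simp

theorem pairwise_CG2 (c i : ℕ) : (CG2 c i).Pairwise (· < ·) := by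
  unfold CG2; split <;> simp

theorem length_CG1_le (c i : ℕ) : (CG1 c i).length ≤ 2 := by
  unfold CG1; split <;> simp

theorem length_CG2_le (c i : ℕ) : (CG2 c i).length ≤ 2 := by
  unfold CG2; split <;> simp

theorem countP_mem_CG2_add_mul {c₁ c₂ : ℕ} (h₁ : c₁ = 0 ∨ c₁ = 1) (h₂ : c₂ = 0 ∨ c₂ = 1) (i : ℕ) :
    (CG1 c₁ i).countP (· ∈ CG2 c₂ i) + c₁ * c₂ = 1 := by
  rcases h₁ with rfl | rfl <;> rcases h₂ with rfl | rfl <;> simp [CG1, CG2]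

variable {g : ℕ → ℕ → List ℕ} {d : ℕ}

theorem mem_Ioo_of_mem_flatMap_gadget (hg : ∀ c i, ∀ x ∈ g c i, 3 * i ≤ x ∧ x ≤ 3 * i + 2)
    {u : Fin d → ℕ} {x : ℕ} (hx : x ∈ (finRange d).flatMap fun k => g (u k) (k.val + 1)) :
    x ∈ Set.Ioo 2 (3 * d + 3) := by
  obtain ⟨k, -, hk⟩ := List.mem_flatMap.1 hx
  have := hg _ _ x hk
  have := k.isLt
  constructor <;> omega

theorem mem_of_mem_flatMap_gadget (hg : ∀ c i, ∀ x ∈ g c i, 3 * i ≤ x ∧ x ≤ 3 * i + 2)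
    {u : Fin d → ℕ} {x : ℕ} (hx : x ∈ (finRange d).flatMap fun k => g (u k) (k.val + 1))
    {k : Fin d} (hxk : 3 * (k.val + 1) ≤ x ∧ x ≤ 3 * (k.val + 1) + 2) :
    x ∈ g (u k) (k.val + 1) := by
  obtain ⟨k', -, hk'⟩ := List.mem_flatMap.1 hx
  obtain rfl : k' = k := Fin.ext (by have := hg _ _ x hk'; omega)
  exact hk'

theorem pairwise_flatMap_gadget (hg : ∀ c i, ∀ x ∈ g c i, 3 * i ≤ x ∧ x ≤ 3 * i + 2)
    (hg' : ∀ c i, (g c i).Pairwise (· < ·)) (u : Fin d → ℕ) :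
    ((finRange d).flatMap fun k => g (u k) (k.val + 1)).Pairwise (· < ·) := by
  refine List.pairwise_flatMap.2 ⟨fun k _ => hg' _ _, (List.pairwise_lt_finRange d).imp ?_⟩
  intro k k' hkk' x hx x' hx'
  have := hg _ _ x hx
  have := hg _ _ x' hx'
  have : k.val < k'.val := hkk'
  omega

theorem length_flatMap_gadget_le (hg : ∀ c i, (g c i).length ≤ 2) (u : Fin d → ℕ) :
    ((finRange d).flatMap fun k => g (u k) (k.val + 1)).length ≤ 2 * d := by
  rw [List.length_flatMap, ← Fin.sum_univ_def]
  calc _ ≤ ∑ _k : Fin d, 2 := Finset.sum_le_sum fun k _ => hg _ _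
    _ = 2 * d := by simp [mul_comm]

variable {u v : Fin d → ℕ}

theorem mem_Ioo_of_mem_VG1 {x : ℕ} (hx : x ∈ VG1 u) : x ∈ Set.Ioo 2 (3 * d + 3) :=
  mem_Ioo_of_mem_flatMap_gadget (g := CG1) (fun _ _ _ => mem_CG1) hx

theorem mem_Ioo_of_mem_VG2 {x : ℕ} (hx : x ∈ VG2 v) : x ∈ Set.Ioo 2 (3 * d + 3) :=
  mem_Ioo_of_mem_flatMap_gadget (g := CG2) (fun _ _ _ => mem_CG2) hx

theorem pairwise_VG1 (u : Fin d → ℕ) : (VG1 u).Pairwise (· < ·) :=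
  pairwise_flatMap_gadget (fun _ _ _ => mem_CG1) pairwise_CG1 u

theorem pairwise_VG2 (v : Fin d → ℕ) : (VG2 v).Pairwise (· < ·) :=
  pairwise_flatMap_gadget (fun _ _ _ => mem_CG2) pairwise_CG2 v

theorem countP_mem_VG2_add_dot (hu : ∀ k, u k = 0 ∨ u k = 1) (hv : ∀ k, v k = 0 ∨ v k = 1) :
    (VG1 u).countP (· ∈ VG2 v) + ∑ k, u k * v k = d := by
  rw [VG1, List.countP_flatMap, ← Fin.sum_univ_def, ← Finset.sum_add_distrib]
  calc _ = ∑ _k : Fin d, 1 := Finset.sum_congr rfl fun k _ => by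
        have hloc : (CG1 (u k) (k.val + 1)).countP (· ∈ VG2 v) =
            (CG1 (u k) (k.val + 1)).countP (· ∈ CG2 (v k) (k.val + 1)) :=
          List.countP_congr fun x hx => by
            simpa using ⟨fun h => mem_of_mem_flatMap_gadget (g := CG2) (u := v)
              (fun _ _ _ => mem_CG2) h (mem_CG1 hx),
              fun h => List.mem_flatMap.2 ⟨k, List.mem_finRange k, h⟩⟩
        rw [Function.comp_apply, hloc]
        exact countP_mem_CG2_add_mul (hu k) (hv k) _
    _ = d := by simp

theorem length_add_dot_le_of_CWIS_VG (hu : ∀ k, u k = 0 ∨ u k = 1)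
    (hv : ∀ k, v k = 0 ∨ v k = 1) {D : List ℕ} (hD : CWIS (VG1 u) (VG2 v) D) :
    D.length + ∑ k, u k * v k ≤ d := by
  have hnd : D.Nodup := ((pairwise_VG1 u).sublist hD.2.1).nodup
  have hD' : D.length ≤ (VG1 u).countP (· ∈ VG2 v) := by
    rw [List.countP_eq_length_filter]
    exact (hnd.subperm fun x hx =>
      List.mem_filter.2 ⟨hD.2.1.subset hx, by simpa using hD.2.2.subset hx⟩).length_le
  have := countP_mem_VG2_add_dot hu hv
  omega

theorem exists_CWIS_VG (hu : ∀ k, u k = 0 ∨ u k = 1) (hv : ∀ k, v k = 0 ∨ v k = 1) :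
    ∃ D, CWIS (VG1 u) (VG2 v) D ∧ D.length + ∑ k, u k * v k = d := by
  have hsub : (VG1 u).filter (· ∈ VG2 v) <+ VG1 u := List.filter_sublist
  have hD := (pairwise_VG1 u).sublist hsub
  refine ⟨(VG1 u).filter (· ∈ VG2 v), ⟨List.isChain_iff_pairwise.2 (hD.imp le_of_lt), hsub, ?_⟩, ?_⟩
  · refine List.sublist_of_subperm_of_pairwise ?_ (hD.imp le_of_lt) ((pairwise_VG2 v).imp le_of_lt)
    exact hD.nodup.subperm fun x hx => by simpa using (List.mem_filter.1 hx).2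
  · rw [← List.countP_eq_length_filter]
    exact countP_mem_VG2_add_dot hu hv

end Gadgets

section Reduction

variable {d : ℕ}

theorem redWeight_one : redWeight d 1 = 2 * d := by simp [redWeight]

theorem redWeight_two : redWeight d 2 = 2 * (2 * d) := by simp [redWeight]; ring

theorem redWeight_Y : redWeight d (3 * d + 3) = 2 * (2 * d) := by
  unfold redWeight; split_ifs <;> omega

theorem redWeight_Z : redWeight d (3 * d + 4) = 2 * d := by
  unfold redWeight; split_ifs <;> omega

theorem sum_map_redWeight {D : List ℕ} (hD : ∀ x ∈ D, x ∈ Set.Ioo 2 (3 * d + 3)) :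
    (D.map (redWeight d)).sum = D.length := by
  rw [List.map_congr_left fun x hx => show redWeight d x = 1 by
    obtain ⟨h₂, h₃⟩ := hD x hx
    rw [redWeight, if_neg (by omega), if_neg (by omega), if_neg (by omega), if_neg (by omega)]]
  simp

theorem isGreatest_sum_map_redWeight {n : ℕ} {u v : Fin n → Fin d → ℕ}
    (hu : ∀ i k, u i k = 0 ∨ u i k = 1) (hv : ∀ j k, v j k = 0 ∨ v j k = 1) {m : ℕ} {i₀ j₀ : Fin n}
    (hm : ∑ k, u i₀ k * v j₀ k = m) (hmin : ∀ i j, m ≤ ∑ k, u i k * v j k) :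
    IsGreatest {w | ∃ i j D, CWIS (VG1 (u i)) (VG2 (v j)) D ∧ (D.map (redWeight d)).sum = w}
      (d - m) := by
  have hw : ∀ {i D}, D <+ VG1 (u i) → (D.map (redWeight d)).sum = D.length := fun hD =>
    sum_map_redWeight fun _ hx => mem_Ioo_of_mem_VG1 (hD.subset hx)
  constructor
  · obtain ⟨D, hD, hDl⟩ := exists_CWIS_VG (hu i₀) (hv j₀)
    exact ⟨i₀, j₀, D, hD, by rw [hw hD.2.1]; omega⟩
  · rintro _ ⟨i, j, D, hD, rfl⟩
    have := length_add_dot_le_of_CWIS_VG (hu i) (hv j) hD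
    have := hmin i j
    rw [hw hD.2.1]
    omega

end Reduction

theorem most_orthogonal_vectors_reduction_general {n d : ℕ} (hn : 0 < n)
    (u v : Fin n → Fin d → ℕ)
    (hu : ∀ i k, u i k = 0 ∨ u i k = 1) (hv : ∀ j k, v j k = 0 ∨ v j k = 1) :
    WLCWIS (redWeight d)
        (P1 (fun i => VG1 (u i)) 1 2 (3*d+3) (3*d+4))
        (P2 (fun j => VG2 (v j)) 1 2 (3*d+3) (3*d+4)) =
      d - sInf {p : ℕ | ∃ i j, ∑ k : Fin d, u i k * v j k = p} + (4*n - 2) * (2*d) ∧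
    ∀ r : ℕ, r ≤ d →
      ((∃ i j, ∑ k : Fin d, u i k * v j k ≤ r) ↔
        d - r + (4*n - 2) * (2*d) ≤
          WLCWIS (redWeight d)
            (P1 (fun i => VG1 (u i)) 1 2 (3*d+3) (3*d+4))
            (P2 (fun j => VG2 (v j)) 1 2 (3*d+3) (3*d+4))) := by
  obtain ⟨i₀, j₀, hm⟩ := Nat.sInf_mem (s := {p : ℕ | ∃ i j, ∑ k : Fin d, u i k * v j k = p})
    ⟨_, ⟨0, hn⟩, ⟨0, hn⟩, rfl⟩
  have hmin : ∀ i j, sInf {p : ℕ | ∃ i j, ∑ k : Fin d, u i k * v j k = p} ≤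
      ∑ k, u i k * v j k := fun i j => Nat.sInf_le ⟨i, j, rfl⟩
  have hs : ∀ i, ∀ x ∈ VG1 (u i), x ∈ Set.Ioo 2 (3 * d + 3) := fun _ _ => mem_Ioo_of_mem_VG1
  have ht : ∀ j, ∀ x ∈ VG2 (v j), x ∈ Set.Ioo 2 (3 * d + 3) := fun _ _ => mem_Ioo_of_mem_VG2
  have hW := WLCWIS_P1_P2 (by norm_num) (by omega) (by omega) hs ht
    (fun i => (sum_map_redWeight (hs i)).trans_le (length_flatMap_gadget_le length_CG1_le _))
    (fun j => (sum_map_redWeight (ht j)).trans_le (length_flatMap_gadget_le length_CG2_le _))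
    redWeight_one redWeight_two redWeight_Y redWeight_Z (isGreatest_sum_map_redWeight hu hv hm hmin)
  obtain ⟨D, -, hmd⟩ := exists_CWIS_VG (hu i₀) (hv j₀)
  refine ⟨hW, fun r hr => ?_⟩
  rw [hW]
  constructor
  · rintro ⟨i, j, hij⟩
    have := hmin i j
    omega
  · exact fun h => ⟨i₀, j₀, by omega⟩

theorem most_orthogonal_vectors_reduction {n d : ℕ} (hn : 0 < n) (hd : 0 < d)
    (u v : Fin n → Fin d → ℕ)
    (hu : ∀ i k, u i k = 0 ∨ u i k = 1) (hv : ∀ j k, v j k = 0 ∨ v j k = 1) :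
    WLCWIS (redWeight d)
        (P1 (fun i => VG1 (u i)) 1 2 (3*d+3) (3*d+4))
        (P2 (fun j => VG2 (v j)) 1 2 (3*d+3) (3*d+4)) =
      d - sInf {p : ℕ | ∃ i j, ∑ k : Fin d, u i k * v j k = p} + (4*n - 2) * (2*d) ∧
    ∀ r : ℕ, r ≤ d →
      ((∃ i j, ∑ k : Fin d, u i k * v j k ≤ r) ↔
        d - r + (4*n - 2) * (2*d) ≤
          WLCWIS (redWeight d)
            (P1 (fun i => VG1 (u i)) 1 2 (3*d+3) (3*d+4))
            (P2 (fun j => VG2 (v j)) 1 2 (3*d+3) (3*d+4))) :=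
  most_orthogonal_vectors_reduction_general hn u v hu hv
end
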